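/- arXiv:cs/0610122 — 11 statements merged into one kernel-verified Lean document; each statement's English description precedes it below -/
import Mathlib

section
/- Forward error of the Horner scheme in the standard model of floating point arithmetic: Let u be a real number with 0 < u, let n be a positive integer with 2n·u < 1, let x, a_0, …, a_n be real numbers, and let r_0, …, r_n be real numbers such that r_n = a_n and, for every i = n−1, …, 0, r_i = (r_{i+1}·x·(1+ε_i) + a_i)·(1+δ_i) for some real numbers ε_i, δ_i with |ε_i| ≤ u and |δ_i| ≤ u. Then |r_0 − Σ_{i=0}^n a_i x^i| ≤ γ_{2n} · Σ_{i=0}^n |a_i| |x|^i. -/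
/-!
Each rounding turns an admissible relative error `c - 1` into `c (1 + u) - 1`: if `y` approximates
`y'` with `|y - y'| ≤ (c - 1) Y` and `|y'| ≤ Y`, then `|y (1 + ε) - y'| ≤ (c (1 + u) - 1) Y`.
Running Horner's recurrence from the top coefficient down, every step performs two roundings, so
`r₀` is within `((1 + u)^{2n} - 1) ∑ |aᵢ| |x|ⁱ` of the exact value. Finally
`(1 + u)^k ≤ exp (k u) ≤ 1 / (1 - k u)`, that is `(1 + u)^k - 1 ≤ γ_k`.
-/

open Finset

lemma abs_mul_one_add_sub_le {y y' Y c u ε : ℝ} (h : |y - y'| ≤ (c - 1) * Y)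
    (hy' : |y'| ≤ Y) (hε : |ε| ≤ u) : |y * (1 + ε) - y'| ≤ (c * (1 + u) - 1) * Y := by
  have hY : 0 ≤ Y := (abs_nonneg _).trans hy'
  have hcY : 0 ≤ (c - 1) * Y := (abs_nonneg _).trans h
  calc |y * (1 + ε) - y'| = |(y - y') * (1 + ε) + y' * ε| := by ring_nf
    _ ≤ |y - y'| * (1 + |ε|) + |y'| * |ε| := by
        grw [abs_add_le, abs_mul, abs_mul, abs_add_le 1 ε, abs_one]
    _ ≤ (c - 1) * Y * (1 + u) + Y * u := by
        gcongr
    _ = (c * (1 + u) - 1) * Y := by ring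

lemma abs_horner_step_sub_le {y y' Y c u x a ε δ : ℝ} (h : |y - y'| ≤ (c - 1) * Y)
    (hy' : |y'| ≤ Y) (hc : 1 ≤ c) (hε : |ε| ≤ u) (hδ : |δ| ≤ u) :
    |(y * x * (1 + ε) + a) * (1 + δ) - (a + x * y')| ≤
      (c * (1 + u) * (1 + u) - 1) * (|a| + |x| * Y) := by
  have hu : 0 ≤ u := (abs_nonneg _).trans hε
  have hmul : |y * x - y' * x| ≤ (c - 1) * (|x| * Y) := by
    rw [← sub_mul, abs_mul]; nlinarith [abs_nonneg x]
  have hmul' : |y' * x| ≤ |x| * Y := by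
    rw [abs_mul, mul_comm]; exact mul_le_mul_of_nonneg_left hy' (abs_nonneg x)
  have hround := abs_mul_one_add_sub_le hmul hmul' hε
  have hadd : |y * x * (1 + ε) + a - (a + x * y')| ≤ (c * (1 + u) - 1) * (|a| + |x| * Y) := by
    have : 0 ≤ (c * (1 + u) - 1) * |a| := by
      have : 1 ≤ c * (1 + u) := by nlinarith
      exact mul_nonneg (by linarith) (abs_nonneg a)
    calc _ = |y * x * (1 + ε) - y' * x| := by ring_nf
      _ ≤ _ := by linarith
  have hadd' : |a + x * y'| ≤ |a| + |x| * Y :=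
    (abs_add_le _ _).trans (by rw [mul_comm x]; linarith)
  exact abs_mul_one_add_sub_le hadd hadd' hδ

lemma sum_range_succ_mul_pow {R : Type*} [CommSemiring R] (f : ℕ → R) (x : R) (n : ℕ) :
    ∑ i ∈ range (n + 1), f i * x ^ i = f 0 + x * ∑ i ∈ range n, f (i + 1) * x ^ i := by
  rw [sum_range_succ', mul_sum, add_comm]
  rw [pow_zero, mul_one]
  exact congrArg _ (sum_congr rfl fun i _ ↦ by ring)

theorem abs_horner_sub_le (u x : ℝ) (a r ε δ : ℕ → ℝ) (n : ℕ)
    (hε : ∀ i < n, |ε i| ≤ u) (hδ : ∀ i < n, |δ i| ≤ u) (hrn : r n = a n)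
    (hrec : ∀ i < n, r i = (r (i + 1) * x * (1 + ε i) + a i) * (1 + δ i)) :
    |r 0 - ∑ i ∈ range (n + 1), a i * x ^ i| ≤
      ((1 + u) ^ (2 * n) - 1) * ∑ i ∈ range (n + 1), |a i| * |x| ^ i := by
  induction n generalizing a r ε δ with
  | zero => simp [hrn]
  | succ n ih =>
    have htail := ih (fun i ↦ a (i + 1)) (fun i ↦ r (i + 1)) (fun i ↦ ε (i + 1))
      (fun i ↦ δ (i + 1)) (fun i hi ↦ hε (i + 1) (by omega)) (fun i hi ↦ hδ (i + 1) (by omega))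
      hrn (fun i hi ↦ hrec (i + 1) (by omega))
    have htail_abs : |∑ i ∈ range (n + 1), a (i + 1) * x ^ i| ≤
        ∑ i ∈ range (n + 1), |a (i + 1)| * |x| ^ i :=
      (abs_sum_le_sum_abs _ _).trans_eq (by simp only [abs_mul, abs_pow])
    have hc : 1 ≤ (1 + u) ^ (2 * n) :=
      one_le_pow₀ (by linarith [(abs_nonneg _).trans (hε 0 n.succ_pos)])
    rw [sum_range_succ_mul_pow a, sum_range_succ_mul_pow (fun i ↦ |a i|), hrec 0 n.succ_pos]
    convert abs_horner_step_sub_le htail htail_abs hc (hε 0 n.succ_pos) (hδ 0 n.succ_pos)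
      using 2
    ring

lemma one_add_pow_sub_one_le {u : ℝ} {k : ℕ} (hu : 0 ≤ u) (hku : k * u < 1) :
    (1 + u) ^ k - 1 ≤ k * u / (1 - k * u) := by
  have hpow : (1 + u) ^ k ≤ 1 / (1 - k * u) :=
    calc (1 + u) ^ k ≤ Real.exp u ^ k := by gcongr; linarith [Real.add_one_le_exp u]
      _ = Real.exp (k * u) := (Real.exp_nat_mul u k).symm
      _ ≤ 1 / (1 - k * u) := Real.exp_bound_div_one_sub_of_interval (by positivity) hku
  have hγ : k * u / (1 - k * u) = 1 / (1 - k * u) - 1 := by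
    field_simp [(by linarith : (1 - k * u) ≠ 0)]
    ring
  linarith

theorem horner_forward_error_general
    (u : ℝ) (hu : 0 < u) (n : ℕ) (h2nu : 2 * (n : ℝ) * u < 1)
    (x : ℝ) (a r ε δ : ℕ → ℝ)
    (hεu : ∀ i < n, |ε i| ≤ u) (hδu : ∀ i < n, |δ i| ≤ u)
    (hrn : r n = a n)
    (hrec : ∀ i < n, r i = (r (i + 1) * x * (1 + ε i) + a i) * (1 + δ i)) :
    |r 0 - ∑ i ∈ Finset.range (n + 1), a i * x ^ i| ≤
      (2 * (n : ℝ) * u / (1 - 2 * (n : ℝ) * u)) *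
        ∑ i ∈ Finset.range (n + 1), |a i| * |x| ^ i := by
  have hγ : (1 + u) ^ (2 * n) - 1 ≤ 2 * (n : ℝ) * u / (1 - 2 * (n : ℝ) * u) := by
    exact_mod_cast one_add_pow_sub_one_le (k := 2 * n) hu.le (by push_cast; exact h2nu)
  calc _ ≤ ((1 + u) ^ (2 * n) - 1) * ∑ i ∈ range (n + 1), |a i| * |x| ^ i :=
        abs_horner_sub_le u x a r ε δ n hεu hδu hrn hrec
    _ ≤ _ := by gcongr

/-- Forward error of the Horner scheme in the standard model of floating point
arithmetic. Here `γ_{2n} = 2n·u/(1 − 2n·u)`. -/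
theorem horner_forward_error
    (u : ℝ) (hu : 0 < u) (n : ℕ) (hn : 1 ≤ n) (h2nu : 2 * (n : ℝ) * u < 1)
    (x : ℝ) (a r ε δ : ℕ → ℝ)
    (hεu : ∀ i < n, |ε i| ≤ u) (hδu : ∀ i < n, |δ i| ≤ u)
    (hrn : r n = a n)
    (hrec : ∀ i < n, r i = (r (i + 1) * x * (1 + ε i) + a i) * (1 + δ i)) :
    |r 0 - ∑ i ∈ Finset.range (n + 1), a i * x ^ i| ≤
      (2 * (n : ℝ) * u / (1 - 2 * (n : ℝ) * u)) *
        ∑ i ∈ Finset.range (n + 1), |a i| * |x| ^ i :=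
  horner_forward_error_general u hu n h2nu x a r ε δ hεu hδu hrn hrec
end

section
/- Forward error of the Horner evaluation of the rounded sum of two polynomials (Lemma 1, part (i)): Let u be a real number with 0 < u, let n be a positive integer with (2n+1)·u < 1, and let x, a_0, …, a_n, b_0, …, b_n be real numbers. Suppose c_i = (a_i + b_i)·(1+μ_i) with |μ_i| ≤ u for every i = 0, …, n, and suppose r_0, …, r_n are real numbers with r_n = c_n and, for every i = n−1, …, 0, r_i = (r_{i+1}·x·(1+ε_i) + c_i)·(1+δ_i) for some ε_i, δ_i with |ε_i| ≤ u and |δ_i| ≤ u. Then |r_0 − Σ_{i=0}^n (a_i + b_i) x^i| ≤ γ_{2n+1} · Σ_{i=0}^n |a_i + b_i| |x|^i. -/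
/-!
Unwinding the Horner recursion from the top, the `i`-th intermediate value `r i` approximates
the tail polynomial `∑_{j ≤ n - i} s (i + j) x ^ j`, where `s = a + b`, with forward error at most
`γ_{2(n-i)+1}` times the same tail evaluated at `|s|` and `|x|`. Each Horner step multiplies the
previous value by `(1 + ε)(1 + δ)` and the new coefficient by `(1 + μ)(1 + δ)`, and
`(1 + γ_k)(1 + u)² ≤ 1 + γ_{k+2}` keeps the bound of the required shape.
-/

open Finset

noncomputable def gamma (u : ℝ) (k : ℕ) : ℝ := k * u / (1 - k * u)

section Gamma

variable {u : ℝ} {k : ℕ}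

lemma cast_mul_lt_one_of_le {l : ℕ} (hu : 0 ≤ u) (hkl : k ≤ l) (hl : (l : ℝ) * u < 1) :
    (k : ℝ) * u < 1 :=
  lt_of_le_of_lt (mul_le_mul_of_nonneg_right (by exact_mod_cast hkl) hu) hl

lemma gamma_nonneg (hu : 0 ≤ u) (hk : (k : ℝ) * u < 1) : 0 ≤ gamma u k :=
  div_nonneg (by positivity) (by linarith)

lemma one_add_gamma (hk : (k : ℝ) * u < 1) : 1 + gamma u k = 1 / (1 - k * u) := by
  rw [gamma]
  field_simp [(sub_pos.2 hk).ne']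
  ring

lemma self_le_gamma_one (hu : 0 ≤ u) (h1 : u < 1) : u ≤ gamma u 1 := by
  rw [gamma, Nat.cast_one, one_mul, le_div_iff₀ (by linarith)]
  nlinarith

lemma one_add_gamma_mul_le (hu : 0 ≤ u) (hk : ((k + 1 : ℕ) : ℝ) * u < 1) :
    (1 + gamma u k) * (1 + u) ≤ 1 + gamma u (k + 1) := by
  have hk' : (k : ℝ) * u < 1 := cast_mul_lt_one_of_le hu k.le_succ hk
  push_cast at hk
  rw [one_add_gamma hk', one_add_gamma (by push_cast; exact hk), one_div_mul_eq_div,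
    div_le_div_iff₀ (by linarith) (by push_cast; linarith)]
  push_cast
  nlinarith [mul_nonneg (mul_nonneg (k.cast_nonneg (α := ℝ)) hu) hu, sq_nonneg u]

lemma one_add_gamma_mul_sq_le (hu : 0 ≤ u) (hk : ((k + 2 : ℕ) : ℝ) * u < 1) :
    (1 + gamma u k) * (1 + u) ^ 2 ≤ 1 + gamma u (k + 2) :=
  calc (1 + gamma u k) * (1 + u) ^ 2 = (1 + gamma u k) * (1 + u) * (1 + u) := by ring
    _ ≤ (1 + gamma u (k + 1)) * (1 + u) := by
      gcongr
      exact one_add_gamma_mul_le hu (cast_mul_lt_one_of_le hu (by omega) hk)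
    _ ≤ 1 + gamma u (k + 2) := one_add_gamma_mul_le hu hk

end Gamma

def hornerTail {R : Type*} [CommSemiring R] (s : ℕ → R) (x : R) (i k : ℕ) : R :=
  ∑ j ∈ range (k + 1), s (i + j) * x ^ j

section HornerTail

variable {R : Type*} (s : ℕ → R) (x : R) (i k : ℕ)

@[simp]
lemma hornerTail_zero [CommSemiring R] : hornerTail s x i 0 = s i := by
  simp [hornerTail]

lemma hornerTail_succ [CommSemiring R] :
    hornerTail s x i (k + 1) = s i + x * hornerTail s x (i + 1) k := by
  rw [hornerTail, sum_range_succ', hornerTail, mul_sum, add_comm]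
  simp only [add_zero, pow_zero, mul_one, pow_succ, add_assoc, add_comm 1]
  congr 1
  exact sum_congr rfl fun j _ => by ring

lemma abs_hornerTail_le [CommRing R] [LinearOrder R] [IsStrictOrderedRing R] :
    |hornerTail s x i k| ≤ hornerTail (fun j => |s j|) |x| i k :=
  (abs_sum_le_sum_abs _ _).trans_eq (sum_congr rfl fun j _ => by rw [abs_mul, abs_pow])

end HornerTail

section RoundingError

variable {u : ℝ}

lemma abs_one_add_le {y : ℝ} (hy : |y| ≤ u) : |1 + y| ≤ 1 + u :=
  (abs_add_le _ _).trans (by rw [abs_one]; linarith)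

lemma abs_one_add_mul_one_add_sub_one_le {y z : ℝ} (hy : |y| ≤ u) (hz : |z| ≤ u) :
    |(1 + y) * (1 + z) - 1| ≤ (1 + u) ^ 2 - 1 :=
  calc |(1 + y) * (1 + z) - 1| = |y + z + y * z| := by ring_nf
    _ ≤ |y| + |z| + |y| * |z| := by rw [← abs_mul]; exact abs_add_three _ _ _
    _ ≤ u + u + u * u := by gcongr; exact (abs_nonneg y).trans hy
    _ = (1 + u) ^ 2 - 1 := by ring

lemma abs_one_add_mul_one_add_le {y z : ℝ} (hy : |y| ≤ u) (hz : |z| ≤ u) :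
    |(1 + y) * (1 + z)| ≤ (1 + u) ^ 2 := by
  rw [abs_mul, sq]
  exact mul_le_mul (abs_one_add_le hy) (abs_one_add_le hz) (abs_nonneg _)
    ((abs_nonneg _).trans (abs_one_add_le hy))

/-- One rounded Horner step: `r` is the computed and `p` the exact previous value. -/
lemma abs_horner_step_sub_le_s1 {g x s p q r e d m : ℝ} (hg : 0 ≤ g)
    (he : |e| ≤ u) (hd : |d| ≤ u) (hm : |m| ≤ u) (hpq : |p| ≤ q) (hr : |r - p| ≤ g * q) :
    |(r * x * (1 + e) + s * (1 + m)) * (1 + d) - (s + x * p)| ≤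
      ((1 + g) * (1 + u) ^ 2 - 1) * (|s| + |x| * q) := by
  have hed := abs_one_add_mul_one_add_le he hd
  have hed' := abs_one_add_mul_one_add_sub_one_le he hd
  have hmd' := abs_one_add_mul_one_add_sub_one_le hm hd
  have hq : 0 ≤ q := (abs_nonneg p).trans hpq
  have hsgu : 0 ≤ g * (1 + u) ^ 2 * |s| := by positivity
  calc |(r * x * (1 + e) + s * (1 + m)) * (1 + d) - (s + x * p)|
      = |(r - p) * x * ((1 + e) * (1 + d)) + x * p * ((1 + e) * (1 + d) - 1)
          + s * ((1 + m) * (1 + d) - 1)| := by ring_nf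
    _ ≤ |r - p| * |x| * |(1 + e) * (1 + d)| + |x| * |p| * |(1 + e) * (1 + d) - 1|
          + |s| * |(1 + m) * (1 + d) - 1| := by simp only [← abs_mul]; exact abs_add_three _ _ _
    _ ≤ g * q * |x| * (1 + u) ^ 2 + |x| * q * ((1 + u) ^ 2 - 1) + |s| * ((1 + u) ^ 2 - 1) := by
      gcongr
    _ ≤ ((1 + g) * (1 + u) ^ 2 - 1) * (|s| + |x| * q) := by linarith

end RoundingError

theorem abs_sub_hornerTail_le {u x : ℝ} {n : ℕ} {s r ε δ μ : ℕ → ℝ}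
    (hμ : ∀ i ≤ n, |μ i| ≤ u) (hε : ∀ i < n, |ε i| ≤ u) (hδ : ∀ i < n, |δ i| ≤ u)
    (hrn : r n = s n * (1 + μ n))
    (hrec : ∀ i < n, r i = (r (i + 1) * x * (1 + ε i) + s i * (1 + μ i)) * (1 + δ i))
    (k i : ℕ) (hik : i + k = n) (hk : ((2 * k + 1 : ℕ) : ℝ) * u < 1) :
    |r i - hornerTail s x i k| ≤ gamma u (2 * k + 1) * hornerTail (fun j => |s j|) |x| i k := by
  have hu : 0 ≤ u := (abs_nonneg _).trans (hμ n le_rfl)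
  induction k generalizing i with
  | zero =>
    rw [add_zero] at hik
    subst hik
    rw [hornerTail_zero, hornerTail_zero, hrn]
    calc |s i * (1 + μ i) - s i| = |s i| * |μ i| := by rw [← abs_mul]; ring_nf
      _ ≤ |s i| * u := by gcongr; exact hμ i le_rfl
      _ ≤ gamma u 1 * |s i| := by
        rw [mul_comm]
        gcongr
        exact self_le_gamma_one hu (by simpa using hk)
  | succ k ih =>
    have hi : i < n := by omega
    rw [show 2 * (k + 1) + 1 = 2 * k + 1 + 2 by ring] at hk ⊢
    have hk' := cast_mul_lt_one_of_le hu (Nat.le_add_right _ 2) hk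
    rw [hrec i hi, hornerTail_succ, hornerTail_succ]
    calc _ ≤ ((1 + gamma u (2 * k + 1)) * (1 + u) ^ 2 - 1) *
          (|s i| + |x| * hornerTail (fun j => |s j|) |x| (i + 1) k) :=
        abs_horner_step_sub_le_s1 (gamma_nonneg hu hk') (hε i hi) (hδ i hi) (hμ i hi.le)
          (abs_hornerTail_le s x (i + 1) k) (ih (i + 1) (by omega) hk')
      _ ≤ gamma u (2 * k + 1 + 2) * (|s i| + |x| * hornerTail (fun j => |s j|) |x| (i + 1) k) := by
        have hq := (abs_nonneg _).trans (abs_hornerTail_le s x (i + 1) k)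
        gcongr
        linarith [one_add_gamma_mul_sq_le hu hk]

theorem horner_sum_forward_error_general
    (u : ℝ) (n : ℕ)
    (h2nu : (2 * (n : ℝ) + 1) * u < 1)
    (x : ℝ) (a b c r ε δ μ : ℕ → ℝ)
    (hμu : ∀ i ≤ n, |μ i| ≤ u)
    (hc : ∀ i ≤ n, c i = (a i + b i) * (1 + μ i))
    (hεu : ∀ i < n, |ε i| ≤ u) (hδu : ∀ i < n, |δ i| ≤ u)
    (hrn : r n = c n)
    (hrec : ∀ i < n, r i = (r (i + 1) * x * (1 + ε i) + c i) * (1 + δ i)) :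
    |r 0 - ∑ i ∈ Finset.range (n + 1), (a i + b i) * x ^ i| ≤
      ((2 * (n : ℝ) + 1) * u / (1 - (2 * (n : ℝ) + 1) * u)) *
        ∑ i ∈ Finset.range (n + 1), |a i + b i| * |x| ^ i := by
  have h := abs_sub_hornerTail_le (s := fun i => a i + b i) hμu hεu hδu
    (hrn.trans (hc n le_rfl)) (fun i hi => (hrec i hi).trans (by rw [hc i hi.le]))
    n 0 (zero_add n) (by push_cast; exact h2nu)
  simpa only [hornerTail, gamma, zero_add, Nat.cast_add, Nat.cast_mul, Nat.cast_ofNat,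
    Nat.cast_one] using h

/-- Forward error of the Horner evaluation of the rounded sum of two
polynomials (Lemma 1, part (i)). Here `γ_{2n+1} = (2n+1)·u/(1 − (2n+1)·u)`. -/
theorem horner_sum_forward_error
    (u : ℝ) (hu : 0 < u) (n : ℕ) (hn : 1 ≤ n)
    (h2nu : (2 * (n : ℝ) + 1) * u < 1)
    (x : ℝ) (a b c r ε δ μ : ℕ → ℝ)
    (hμu : ∀ i ≤ n, |μ i| ≤ u)
    (hc : ∀ i ≤ n, c i = (a i + b i) * (1 + μ i))
    (hεu : ∀ i < n, |ε i| ≤ u) (hδu : ∀ i < n, |δ i| ≤ u)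
    (hrn : r n = c n)
    (hrec : ∀ i < n, r i = (r (i + 1) * x * (1 + ε i) + c i) * (1 + δ i)) :
    |r 0 - ∑ i ∈ Finset.range (n + 1), (a i + b i) * x ^ i| ≤
      ((2 * (n : ℝ) + 1) * u / (1 - (2 * (n : ℝ) + 1) * u)) *
        ∑ i ∈ Finset.range (n + 1), |a i + b i| * |x| ^ i :=
  horner_sum_forward_error_general u n h2nu x a b c r ε δ μ hμu hc hεu hδu hrn hrec
end

section
/- Lower bound of the exact sum by the computed Horner value for nonnegative data (Lemma 1, part (ii)): Let u be a real number with 0 ≤ u < 1, let n be a positive integer, let x ≥ 0 be a real number, and let a_0, …, a_n, b_0, …, b_n be nonnegative real numbers. Suppose r_0, …, r_n are real numbers such that r_n = (a_n + b_n)/(1+μ_n) and, for every i = n−1, …, 0, r_i = ( r_{i+1}·x/(1+ε_i) + (a_i + b_i)/(1+μ_i) ) / (1+δ_i), where all the perturbations ε_i, δ_i, μ_i have absolute value at most u. Then Σ_{i=0}^n (a_i + b_i) x^i ≤ (1+u)^{2n+1} · r_0. -/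
/-!
A floating point operation perturbs a value by a factor `(1 + v)⁻¹` with `|v| ≤ u < 1`, and for
`y ≥ 0` such a perturbation is undone up to one factor `1 + u`: `y ≤ (1 + u) * (y / (1 + v))`.
With `s i = a i + b i ≥ 0`, one Horner step `r i = (r (i+1) x / (1 + ε i) + s i / (1 + μ i)) / (1 + δ i)`
thus gives `r (i+1) x + s i ≤ (1 + u)² r i`, while the leading coefficient gives `s n ≤ (1 + u) r n`.
Peeling off the constant coefficient and shifting all sequences by one, induction on `n` accumulates
the factor `(1 + u)^(2n+1)`; the nonnegativity of `r 1` needed in the step comes from the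
induction hypothesis itself.
-/

namespace Horner

variable {u : ℝ}

lemma one_add_pos_of_abs_le {v : ℝ} (hv : |v| ≤ u) (hu : u < 1) : 0 < 1 + v := by
  linarith [neg_abs_le v]

lemma le_one_add_mul_div_one_add {y v : ℝ} (hy : 0 ≤ y) (hv : |v| ≤ u) (hu : u < 1) :
    y ≤ (1 + u) * (y / (1 + v)) := by
  have hv₀ := one_add_pos_of_abs_le hv hu
  calc y = (1 + v) * (y / (1 + v)) := by field_simp
    _ ≤ (1 + u) * (y / (1 + v)) := by
      gcongr
      exact (le_abs_self v).trans hv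

lemma add_le_one_add_sq_mul_of_horner_step {y z ε δ μ r : ℝ} (hy : 0 ≤ y) (hz : 0 ≤ z)
    (hε : |ε| ≤ u) (hδ : |δ| ≤ u) (hμ : |μ| ≤ u) (hu : u < 1)
    (hr : r = (y / (1 + ε) + z / (1 + μ)) / (1 + δ)) :
    y + z ≤ (1 + u) ^ 2 * r := by
  have hε₀ := one_add_pos_of_abs_le hε hu
  have hδ₀ := one_add_pos_of_abs_le hδ hu
  have hμ₀ := one_add_pos_of_abs_le hμ hu
  have hr₀ : 0 ≤ r := by rw [hr]; positivity
  calc y + z ≤ (1 + u) * (y / (1 + ε) + z / (1 + μ)) := by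
        rw [mul_add]
        exact add_le_add (le_one_add_mul_div_one_add hy hε hu)
          (le_one_add_mul_div_one_add hz hμ hu)
    _ = (1 + u) * ((1 + δ) * r) := by rw [hr]; field_simp
    _ ≤ (1 + u) * ((1 + u) * r) := by
        have hu₀ : 0 ≤ 1 + u := by linarith [(abs_nonneg δ).trans hδ]
        gcongr
        exact (le_abs_self δ).trans hδ
    _ = (1 + u) ^ 2 * r := by ring

lemma sum_range_succ_mul_pow_eq (c : ℕ → ℝ) (x : ℝ) (n : ℕ) :
    ∑ i ∈ Finset.range (n + 2), c i * x ^ i =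
      (∑ i ∈ Finset.range (n + 1), c (i + 1) * x ^ i) * x + c 0 := by
  rw [Finset.sum_range_succ', Finset.sum_mul]
  simp only [pow_succ, pow_zero, mul_one, mul_assoc]

theorem sum_mul_pow_le_one_add_pow_mul_horner (hu0 : 0 ≤ u) (hu1 : u < 1) {x : ℝ}
    (hx : 0 ≤ x) (n : ℕ) (c r ε δ μ : ℕ → ℝ)
    (hc : ∀ i ≤ n, 0 ≤ c i) (hμ : ∀ i ≤ n, |μ i| ≤ u)
    (hε : ∀ i < n, |ε i| ≤ u) (hδ : ∀ i < n, |δ i| ≤ u)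
    (hrn : r n = c n / (1 + μ n))
    (hrec : ∀ i < n, r i = (r (i + 1) * x / (1 + ε i) + c i / (1 + μ i)) / (1 + δ i)) :
    ∑ i ∈ Finset.range (n + 1), c i * x ^ i ≤ (1 + u) ^ (2 * n + 1) * r 0 := by
  induction n generalizing c r ε δ μ with
  | zero =>
    simp only [zero_add, Finset.sum_range_one, pow_zero, mul_one, mul_zero, pow_one]
    rw [hrn]
    exact le_one_add_mul_div_one_add (hc 0 le_rfl) (hμ 0 le_rfl) hu1
  | succ n ih =>
    set C := (1 + u) ^ (2 * n + 1)
    have hC : 1 ≤ C := one_le_pow₀ (by linarith)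
    have htail : ∑ i ∈ Finset.range (n + 1), c (i + 1) * x ^ i ≤ C * r 1 :=
      ih (fun i => c (i + 1)) (fun i => r (i + 1)) (fun i => ε (i + 1)) (fun i => δ (i + 1))
        (fun i => μ (i + 1)) (fun i hi => hc _ (by omega)) (fun i hi => hμ _ (by omega))
        (fun i hi => hε _ (by omega)) (fun i hi => hδ _ (by omega)) hrn
        (fun i hi => hrec _ (by omega))
    have htail₀ : 0 ≤ ∑ i ∈ Finset.range (n + 1), c (i + 1) * x ^ i :=
      Finset.sum_nonneg fun i hi =>
        mul_nonneg (hc _ (by simp at hi; omega)) (pow_nonneg hx i)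
    have hr₁ : 0 ≤ r 1 := nonneg_of_mul_nonneg_right (htail₀.trans htail) (by positivity)
    have hc₀ : 0 ≤ c 0 := hc 0 (by omega)
    have hstep : r 1 * x + c 0 ≤ (1 + u) ^ 2 * r 0 :=
      add_le_one_add_sq_mul_of_horner_step (mul_nonneg hr₁ hx) hc₀ (hε 0 (by omega))
        (hδ 0 (by omega)) (hμ 0 (by omega)) hu1 (hrec 0 (by omega))
    calc ∑ i ∈ Finset.range (n + 1 + 1), c i * x ^ i
        = (∑ i ∈ Finset.range (n + 1), c (i + 1) * x ^ i) * x + c 0 :=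
          sum_range_succ_mul_pow_eq c x n
      _ ≤ C * r 1 * x + C * c 0 := by
          gcongr
          exact le_mul_of_one_le_left hc₀ hC
      _ = C * (r 1 * x + c 0) := by ring
      _ ≤ C * ((1 + u) ^ 2 * r 0) := by gcongr
      _ = (1 + u) ^ (2 * (n + 1) + 1) * r 0 := by ring

end Horner

theorem horner_sum_lower_bound_general
    (u : ℝ) (hu0 : 0 ≤ u) (hu1 : u < 1) (n : ℕ)
    (x : ℝ) (hx : 0 ≤ x) (a b r ε δ μ : ℕ → ℝ)
    (ha : ∀ i ≤ n, 0 ≤ a i) (hb : ∀ i ≤ n, 0 ≤ b i)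
    (hμu : ∀ i ≤ n, |μ i| ≤ u)
    (hεu : ∀ i < n, |ε i| ≤ u) (hδu : ∀ i < n, |δ i| ≤ u)
    (hrn : r n = (a n + b n) / (1 + μ n))
    (hrec : ∀ i < n,
      r i = (r (i + 1) * x / (1 + ε i) + (a i + b i) / (1 + μ i)) / (1 + δ i)) :
    ∑ i ∈ Finset.range (n + 1), (a i + b i) * x ^ i ≤
      (1 + u) ^ (2 * n + 1) * r 0 :=
  Horner.sum_mul_pow_le_one_add_pow_mul_horner hu0 hu1 hx n (fun i => a i + b i) r ε δ μ
    (fun i hi => add_nonneg (ha i hi) (hb i hi)) hμu hεu hδu hrn hrec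

/-- Lower bound of the exact sum by the computed Horner value for nonnegative
data (Lemma 1, part (ii)). -/
theorem horner_sum_lower_bound
    (u : ℝ) (hu0 : 0 ≤ u) (hu1 : u < 1) (n : ℕ) (hn : 1 ≤ n)
    (x : ℝ) (hx : 0 ≤ x) (a b r ε δ μ : ℕ → ℝ)
    (ha : ∀ i ≤ n, 0 ≤ a i) (hb : ∀ i ≤ n, 0 ≤ b i)
    (hμu : ∀ i ≤ n, |μ i| ≤ u)
    (hεu : ∀ i < n, |ε i| ≤ u) (hδu : ∀ i < n, |δ i| ≤ u)
    (hrn : r n = (a n + b n) / (1 + μ n))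
    (hrec : ∀ i < n,
      r i = (r (i + 1) * x / (1 + ε i) + (a i + b i) / (1 + μ i)) / (1 + δ i)) :
    ∑ i ∈ Finset.range (n + 1), (a i + b i) * x ^ i ≤
      (1 + u) ^ (2 * n + 1) * r 0 :=
  horner_sum_lower_bound_general u hu0 hu1 n x hx a b r ε δ μ ha hb hμu hεu hδu hrn hrec
end

section
/- Partial-sum bounds along the Horner recurrence for nonnegative data: Let u be a real number with 0 ≤ u < 1, let n be a positive integer, let x ≥ 0 be a real number, and let a_0, …, a_n, b_0, …, b_n be nonnegative real numbers. Suppose r_0, …, r_n are real numbers such that r_n = (a_n + b_n)/(1+μ_n) and, for every i = n−1, …, 0, r_i = ( r_{i+1}·x/(1+ε_i) + (a_i + b_i)/(1+μ_i) ) / (1+δ_i), where all the perturbations ε_i, δ_i, μ_i have absolute value at most u. Then for every i = 0, …, n, Σ_{j=0}^{i} (a_{n−i+j} + b_{n−i+j}) x^j ≤ (1+u)^{2i+1} · r_{n−i}. -/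
open Finset

/-! Writing `S i` for the `i`-th partial sum, `S (i+1) = (a k + b k) + x * S i` with
`k = n - (i+1)`, while each of the three perturbation factors in the recurrence for `r k`
divides by at most `1 + u`. Since all terms are nonnegative, induction on `i` gains exactly
one factor `(1 + u)` from `μ n` at the start and two factors per step. -/

lemma sum_range_succ_mul_pow_shift {R : Type*} [CommSemiring R] (f : ℕ → R) (x : R) (k m : ℕ) :
    ∑ j ∈ range (m + 1), f (k + j) * x ^ j = f k + x * ∑ j ∈ range m, f (k + 1 + j) * x ^ j := by
  rw [sum_range_succ', mul_sum, add_comm]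
  simp only [add_zero, pow_zero, mul_one, pow_succ]
  congr 1
  refine sum_congr rfl fun j _ => ?_
  rw [add_comm j 1, ← add_assoc]
  ring

lemma one_add_pos_of_abs_le {t u : ℝ} (ht : |t| ≤ u) (hu : u < 1) : 0 < 1 + t := by
  linarith [neg_abs_le t]

lemma le_one_add_mul_div_one_add {t u y : ℝ} (ht : |t| ≤ u) (hu : u < 1) (hy : 0 ≤ y) :
    y ≤ (1 + u) * (y / (1 + t)) := by
  rw [← mul_div_assoc, le_div_iff₀ (one_add_pos_of_abs_le ht hu), mul_comm]
  exact mul_le_mul_of_nonneg_right (by linarith [le_abs_self t]) hy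

lemma add_le_sq_mul_perturbed_step {u ε μ δ p c : ℝ} (hu : u < 1)
    (hε : |ε| ≤ u) (hμ : |μ| ≤ u) (hδ : |δ| ≤ u) (hp : 0 ≤ p) (hc : 0 ≤ c) :
    p + c ≤ (1 + u) ^ 2 * ((p / (1 + ε) + c / (1 + μ)) / (1 + δ)) := by
  have hu0 : 0 ≤ 1 + u := by linarith [abs_nonneg ε]
  have hq : 0 ≤ p / (1 + ε) + c / (1 + μ) :=
    add_nonneg (div_nonneg hp (one_add_pos_of_abs_le hε hu).le)
      (div_nonneg hc (one_add_pos_of_abs_le hμ hu).le)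
  calc p + c ≤ (1 + u) * (p / (1 + ε)) + (1 + u) * (c / (1 + μ)) :=
        add_le_add (le_one_add_mul_div_one_add hε hu hp) (le_one_add_mul_div_one_add hμ hu hc)
    _ = (1 + u) * (p / (1 + ε) + c / (1 + μ)) := by ring
    _ ≤ (1 + u) * ((1 + u) * ((p / (1 + ε) + c / (1 + μ)) / (1 + δ))) :=
        mul_le_mul_of_nonneg_left (le_one_add_mul_div_one_add hδ hu hq) hu0
    _ = (1 + u) ^ 2 * ((p / (1 + ε) + c / (1 + μ)) / (1 + δ)) := by ring

theorem horner_sum_partial_bounds_general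
    (u : ℝ) (hu0 : 0 ≤ u) (hu1 : u < 1) (n : ℕ)
    (x : ℝ) (hx : 0 ≤ x) (a b r ε δ μ : ℕ → ℝ)
    (ha : ∀ i ≤ n, 0 ≤ a i) (hb : ∀ i ≤ n, 0 ≤ b i)
    (hμu : ∀ i ≤ n, |μ i| ≤ u)
    (hεu : ∀ i < n, |ε i| ≤ u) (hδu : ∀ i < n, |δ i| ≤ u)
    (hrn : r n = (a n + b n) / (1 + μ n))
    (hrec : ∀ i < n,
      r i = (r (i + 1) * x / (1 + ε i) + (a i + b i) / (1 + μ i)) / (1 + δ i)) :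
    ∀ i ≤ n,
      ∑ j ∈ Finset.range (i + 1), (a (n - i + j) + b (n - i + j)) * x ^ j ≤
        (1 + u) ^ (2 * i + 1) * r (n - i) := by
  intro i
  induction i with
  | zero =>
    intro _
    simpa [hrn] using le_one_add_mul_div_one_add (hμu n le_rfl) hu1
      (add_nonneg (ha n le_rfl) (hb n le_rfl))
  | succ i ih =>
    intro hi
    set k := n - (i + 1)
    have hkn : k < n := by omega
    rw [show n - i = k + 1 by omega] at ih
    have hS := ih (by omega)
    have hc : 0 ≤ a k + b k := add_nonneg (ha k hkn.le) (hb k hkn.le)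
    have hS_nonneg : 0 ≤ ∑ j ∈ range (i + 1), (a (k + 1 + j) + b (k + 1 + j)) * x ^ j :=
      sum_nonneg fun j hj => mul_nonneg
        (add_nonneg (ha _ (by rw [mem_range] at hj; omega)) (hb _ (by rw [mem_range] at hj; omega))) (pow_nonneg hx j)
    have hr : 0 ≤ r (k + 1) := nonneg_of_mul_nonneg_right (hS_nonneg.trans hS) (by positivity)
    have hpow : 1 ≤ (1 + u) ^ (2 * i + 1) := one_le_pow₀ (by linarith)
    rw [sum_range_succ_mul_pow_shift (fun j => a j + b j), hrec k hkn]
    calc _ ≤ (1 + u) ^ (2 * i + 1) * (r (k + 1) * x + (a k + b k)) := by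
          linarith [mul_le_mul_of_nonneg_left hS hx, le_mul_of_one_le_left hc hpow]
      _ ≤ (1 + u) ^ (2 * i + 1) * ((1 + u) ^ 2 *
            ((r (k + 1) * x / (1 + ε k) + (a k + b k) / (1 + μ k)) / (1 + δ k))) := by
          gcongr
          exact add_le_sq_mul_perturbed_step hu1 (hεu k hkn) (hμu k hkn.le) (hδu k hkn)
            (mul_nonneg hr hx) hc
      _ = _ := by ring

/-- Partial-sum bounds along the Horner recurrence for nonnegative data. -/
theorem horner_sum_partial_bounds
    (u : ℝ) (hu0 : 0 ≤ u) (hu1 : u < 1) (n : ℕ) (hn : 1 ≤ n)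
    (x : ℝ) (hx : 0 ≤ x) (a b r ε δ μ : ℕ → ℝ)
    (ha : ∀ i ≤ n, 0 ≤ a i) (hb : ∀ i ≤ n, 0 ≤ b i)
    (hμu : ∀ i ≤ n, |μ i| ≤ u)
    (hεu : ∀ i < n, |ε i| ≤ u) (hδu : ∀ i < n, |δ i| ≤ u)
    (hrn : r n = (a n + b n) / (1 + μ n))
    (hrec : ∀ i < n,
      r i = (r (i + 1) * x / (1 + ε i) + (a i + b i) / (1 + μ i)) / (1 + δ i)) :
    ∀ i ≤ n,
      ∑ j ∈ Finset.range (i + 1), (a (n - i + j) + b (n - i + j)) * x ^ j ≤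
        (1 + u) ^ (2 * i + 1) * r (n - i) :=
  horner_sum_partial_bounds_general u hu0 hu1 n x hx a b r ε δ μ ha hb hμu hεu hδu hrn hrec
end

section
/- Exactness of the error free transformation for the Horner algorithm (Theorem 2, equation (13)): Let n be a positive integer and let x, a_0, …, a_n, s_0, …, s_n, p_0, …, p_{n−1}, π_0, …, π_{n−1}, σ_0, …, σ_{n−1} be real numbers such that s_n = a_n and, for every i = n−1, …, 0, s_{i+1}·x = p_i + π_i and p_i + a_i = s_i + σ_i. Then Σ_{i=0}^n a_i x^i = s_0 + Σ_{i=0}^{n−1} π_i x^i + Σ_{i=0}^{n−1} σ_i x^i. -/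
/-- Exactness of the error free transformation for the Horner algorithm
(Theorem 2, equation (13)). -/
theorem eft_horner_exact
    (n : ℕ) (hn : 1 ≤ n) (x : ℝ) (a s p π σ : ℕ → ℝ)
    (hsn : s n = a n)
    (hprod : ∀ i < n, s (i + 1) * x = p i + π i)
    (hsum : ∀ i < n, p i + a i = s i + σ i) :
    ∑ i ∈ Finset.range (n + 1), a i * x ^ i =
      s 0 + (∑ i ∈ Finset.range n, π i * x ^ i) +
        ∑ i ∈ Finset.range n, σ i * x ^ i := by
  have key : ∀ j k : ℕ, k + j = n →
      ∑ i ∈ Finset.Ico k (n + 1), a i * x ^ i =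
        s k * x ^ k + ∑ i ∈ Finset.Ico k n, (π i + σ i) * x ^ i := by
    intro j
    induction j with
    | zero =>
      intro k hk
      simp only [Nat.add_zero] at hk
      subst hk
      simp [Finset.sum_Ico_eq_sum_range, hsn]
    | succ j ih =>
      intro k hk
      have hk1 : (k + 1) + j = n := by omega
      have hkn : k < n := by omega
      have h1 : ∑ i ∈ Finset.Ico k (n + 1), a i * x ^ i =
          a k * x ^ k + ∑ i ∈ Finset.Ico (k + 1) (n + 1), a i * x ^ i := by
        rw [Finset.sum_eq_sum_Ico_succ_bot (by omega)]
      have h2 : ∑ i ∈ Finset.Ico k n, (π i + σ i) * x ^ i =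
          (π k + σ k) * x ^ k + ∑ i ∈ Finset.Ico (k + 1) n, (π i + σ i) * x ^ i := by
        rw [Finset.sum_eq_sum_Ico_succ_bot (by omega)]
      rw [h1, ih (k + 1) hk1, h2]
      have hs : s (k + 1) * x ^ (k + 1) = (p k + π k) * x ^ k := by
        rw [pow_succ, ← mul_assoc, mul_comm (s (k+1)) (x ^ k), mul_assoc,
          hprod k hkn, mul_comm]
      rw [hs]
      linear_combination x ^ k * hsum k hkn
  have h := key n 0 (by omega)
  simp only [Finset.range_eq_Ico] at *
  rw [h]
  simp [add_mul, Finset.sum_add_distrib, add_assoc]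
end

section
/- Bound on the error polynomials of the error free transformation for Horner (Theorem 2, equation (14)): Let u be a real number with 0 < u, let n be a positive integer with 2n·u < 1, and let x, a_0, …, a_n be real numbers. Suppose s_n = a_n and, for every i = n−1, …, 0: p_i = s_{i+1}·x·(1+ε_i) with |ε_i| ≤ u, π_i = s_{i+1}·x − p_i, s_i = (p_i + a_i)·(1+δ_i) with |δ_i| ≤ u, and σ_i = (p_i + a_i) − s_i. Then Σ_{i=0}^{n−1} ( |π_i| + |σ_i| ) |x|^i ≤ γ_{2n} · Σ_{i=0}^n |a_i| |x|^i. -/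
/-!
Each Horner step multiplies the computed value by at most `(1 + u)²` and produces local errors
bounded by `((1 + u)² - 1)` times the same quantity `|s_{i+1} x| + |a_i|`. Weighting step `i`
by `|x|^i` and running a downward induction gives `|s_i| |x|^i ≤ (1 + u)^{2(n-i)} T_i` and
`∑_{j ≥ i} (|π_j| + |σ_j|) |x|^j ≤ ((1 + u)^{2(n-i)} - 1) T_i` for the tails
`T_i = ∑_{j ≥ i} |a_j| |x|^j`. Finally `(1 + u)^m ≤ exp (m u) ≤ 1 / (1 - m u)` turns
`(1 + u)^{2n} - 1` into `γ_{2n}`.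
-/

open Finset

theorem one_add_pow_sub_one_le_div {u : ℝ} (hu : 0 ≤ u) {m : ℕ} (hmu : m * u < 1) :
    (1 + u) ^ m - 1 ≤ m * u / (1 - m * u) := by
  have hexp : (1 + u) ^ m ≤ Real.exp (m * u) := by
    rw [Real.exp_nat_mul]
    exact pow_le_pow_left₀ (by linarith) (by linarith [Real.add_one_le_exp u]) m
  have hd : 1 - m * u ≠ 0 := by linarith
  calc (1 + u) ^ m - 1 ≤ 1 / (1 - m * u) - 1 := by
        linarith [Real.exp_bound_div_one_sub_of_interval (by positivity) hmu]
    _ = m * u / (1 - m * u) := by field_simp; ring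

section HornerStep

variable {u ε δ y a p s : ℝ}

theorem abs_mul_one_add_le (hε : |ε| ≤ u) (z : ℝ) : |z * (1 + ε)| ≤ |z| * (1 + u) := by
  rw [abs_mul]
  gcongr
  linarith [abs_add_le 1 ε, abs_one (α := ℝ)]

theorem abs_sub_mul_one_add_le (hε : |ε| ≤ u) (z : ℝ) : |z - z * (1 + ε)| ≤ |z| * u := by
  rw [show z - z * (1 + ε) = -(z * ε) by ring, abs_neg, abs_mul]
  gcongr

theorem abs_add_le_of_eq_mul_one_add (hε : |ε| ≤ u) (hp : p = y * (1 + ε)) :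
    |p + a| ≤ |y| * (1 + u) + |a| := by
  subst hp
  linarith [abs_add_le (y * (1 + ε)) a, abs_mul_one_add_le hε y]

theorem abs_horner_step_le (hε : |ε| ≤ u) (hδ : |δ| ≤ u) (hp : p = y * (1 + ε))
    (hs : s = (p + a) * (1 + δ)) : |s| ≤ (1 + u) ^ 2 * (|y| + |a|) := by
  have hu : 0 ≤ u := (abs_nonneg ε).trans hε
  calc |s| ≤ |p + a| * (1 + u) := hs ▸ abs_mul_one_add_le hδ _
    _ ≤ (|y| * (1 + u) + |a|) * (1 + u) := by
        gcongr; exact abs_add_le_of_eq_mul_one_add hε hp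
    _ ≤ (1 + u) ^ 2 * (|y| + |a|) := by
        nlinarith [mul_nonneg (abs_nonneg a) (mul_nonneg hu (by linarith : (0 : ℝ) ≤ 1 + u))]

theorem horner_step_error_le (hε : |ε| ≤ u) (hδ : |δ| ≤ u) (hp : p = y * (1 + ε))
    (hs : s = (p + a) * (1 + δ)) :
    |y - p| + |p + a - s| ≤ ((1 + u) ^ 2 - 1) * (|y| + |a|) := by
  have hu : 0 ≤ u := (abs_nonneg ε).trans hε
  calc |y - p| + |p + a - s| ≤ |y| * u + |p + a| * u :=
        add_le_add (hp ▸ abs_sub_mul_one_add_le hε y) (hs ▸ abs_sub_mul_one_add_le hδ _)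
    _ ≤ |y| * u + (|y| * (1 + u) + |a|) * u := by
        gcongr; exact abs_add_le_of_eq_mul_one_add hε hp
    _ ≤ ((1 + u) ^ 2 - 1) * (|y| + |a|) := by
        nlinarith [mul_nonneg (abs_nonneg a) hu, mul_nonneg (abs_nonneg a) (mul_nonneg hu hu)]

end HornerStep

section HornerRecurrence

variable {S e A : ℕ → ℝ} {r : ℝ} {n : ℕ}

theorem sum_le_pow_sub_one_mul_sum_of_recurrence (hr : 1 ≤ r) (hA : ∀ i, 0 ≤ A i)
    (hSn : S n ≤ A n) (hS : ∀ i < n, S i ≤ r * (S (i + 1) + A i))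
    (he : ∀ i < n, e i ≤ (r - 1) * (S (i + 1) + A i)) :
    ∑ i ∈ range n, e i ≤ (r ^ n - 1) * ∑ i ∈ range (n + 1), A i := by
  have tail : ∀ i ≤ n, S i ≤ r ^ (n - i) * ∑ j ∈ Ico i (n + 1), A j ∧
      ∑ j ∈ Ico i n, e j ≤ (r ^ (n - i) - 1) * ∑ j ∈ Ico i (n + 1), A j := by
    intro i hi
    induction hi using Nat.decreasingInduction with
    | self => simp [hSn]
    | of_succ i hi ih =>
      obtain ⟨ihS, ihe⟩ := ih
      set T := ∑ j ∈ Ico (i + 1) (n + 1), A j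
      set c := r ^ (n - (i + 1))
      have hc : 1 ≤ c := one_le_pow₀ hr
      have hpow : r ^ (n - i) = r * c := by rw [← pow_succ']; congr 1; omega
      have hrc : 0 ≤ r * (c - 1) * A i :=
        mul_nonneg (mul_nonneg (by linarith) (by linarith)) (hA i)
      rw [sum_eq_sum_Ico_succ_bot (by omega : i < n + 1), sum_eq_sum_Ico_succ_bot hi, hpow]
      constructor
      · calc S i ≤ r * (S (i + 1) + A i) := hS i hi
          _ ≤ r * (c * T + A i) := by gcongr
          _ ≤ r * c * (A i + T) := by nlinarith
      · calc e i + ∑ j ∈ Ico (i + 1) n, e j ≤ (r - 1) * (S (i + 1) + A i) + (c - 1) * T :=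
            add_le_add (he i hi) ihe
          _ ≤ (r - 1) * (c * T + A i) + (c - 1) * T := by gcongr
          _ ≤ (r * c - 1) * (A i + T) := by nlinarith
  rw [range_eq_Ico, range_eq_Ico]
  simpa using (tail 0 n.zero_le).2

theorem sum_mul_pow_le_pow_sub_one_mul_sum_of_recurrence {v : ℝ} (hv : 0 ≤ v) (hr : 1 ≤ r)
    (hA : ∀ i, 0 ≤ A i) (hSn : S n ≤ A n) (hS : ∀ i < n, S i ≤ r * (S (i + 1) * v + A i))
    (he : ∀ i < n, e i ≤ (r - 1) * (S (i + 1) * v + A i)) :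
    ∑ i ∈ range n, e i * v ^ i ≤ (r ^ n - 1) * ∑ i ∈ range (n + 1), A i * v ^ i := by
  refine sum_le_pow_sub_one_mul_sum_of_recurrence (S := fun i => S i * v ^ i) hr
    (fun i => mul_nonneg (hA i) (pow_nonneg hv i)) (by gcongr) (fun i hi => ?_) (fun i hi => ?_)
  · calc S i * v ^ i ≤ r * (S (i + 1) * v + A i) * v ^ i := by gcongr; exact hS i hi
      _ = r * (S (i + 1) * v ^ (i + 1) + A i * v ^ i) := by ring
  · calc e i * v ^ i ≤ (r - 1) * (S (i + 1) * v + A i) * v ^ i := by gcongr; exact he i hi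
      _ = (r - 1) * (S (i + 1) * v ^ (i + 1) + A i * v ^ i) := by ring

end HornerRecurrence

theorem eft_horner_error_bound_general
    (u : ℝ) (hu : 0 < u) (n : ℕ) (h2nu : 2 * (n : ℝ) * u < 1)
    (x : ℝ) (a s p π σ ε δ : ℕ → ℝ)
    (hεu : ∀ i < n, |ε i| ≤ u) (hδu : ∀ i < n, |δ i| ≤ u)
    (hsn : s n = a n)
    (hp : ∀ i < n, p i = s (i + 1) * x * (1 + ε i))
    (hπ : ∀ i < n, π i = s (i + 1) * x - p i)
    (hs : ∀ i < n, s i = (p i + a i) * (1 + δ i))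
    (hσ : ∀ i < n, σ i = (p i + a i) - s i) :
    ∑ i ∈ Finset.range n, (|π i| + |σ i|) * |x| ^ i ≤
      (2 * (n : ℝ) * u / (1 - 2 * (n : ℝ) * u)) *
        ∑ i ∈ Finset.range (n + 1), |a i| * |x| ^ i := by
  have hγ := one_add_pow_sub_one_le_div hu.le (m := 2 * n) (by push_cast; linarith)
  push_cast at hγ
  calc ∑ i ∈ range n, (|π i| + |σ i|) * |x| ^ i
      ≤ (((1 + u) ^ 2) ^ n - 1) * ∑ i ∈ range (n + 1), |a i| * |x| ^ i := by
        refine sum_mul_pow_le_pow_sub_one_mul_sum_of_recurrence (S := fun i => |s i|)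
          (abs_nonneg x) (one_le_pow₀ (by linarith)) (fun i => abs_nonneg (a i)) (by rw [hsn])
          (fun i hi => ?_) (fun i hi => ?_)
        · simpa only [abs_mul] using abs_horner_step_le (hεu i hi) (hδu i hi) (hp i hi) (hs i hi)
        · simpa only [hπ i hi, hσ i hi, abs_mul] using
            horner_step_error_le (hεu i hi) (hδu i hi) (hp i hi) (hs i hi)
    _ ≤ (2 * (n : ℝ) * u / (1 - 2 * (n : ℝ) * u)) *
          ∑ i ∈ range (n + 1), |a i| * |x| ^ i := by
        rw [← pow_mul]
        gcongr

/-- Bound on the error polynomials of the error free transformation for Horner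
(Theorem 2, equation (14)). Here `γ_{2n} = 2n·u/(1 − 2n·u)`. -/
theorem eft_horner_error_bound
    (u : ℝ) (hu : 0 < u) (n : ℕ) (hn : 1 ≤ n) (h2nu : 2 * (n : ℝ) * u < 1)
    (x : ℝ) (a s p π σ ε δ : ℕ → ℝ)
    (hεu : ∀ i < n, |ε i| ≤ u) (hδu : ∀ i < n, |δ i| ≤ u)
    (hsn : s n = a n)
    (hp : ∀ i < n, p i = s (i + 1) * x * (1 + ε i))
    (hπ : ∀ i < n, π i = s (i + 1) * x - p i)
    (hs : ∀ i < n, s i = (p i + a i) * (1 + δ i))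
    (hσ : ∀ i < n, σ i = (p i + a i) - s i) :
    ∑ i ∈ Finset.range n, (|π i| + |σ i|) * |x| ^ i ≤
      (2 * (n : ℝ) * u / (1 - 2 * (n : ℝ) * u)) *
        ∑ i ∈ Finset.range (n + 1), |a i| * |x| ^ i :=
  eft_horner_error_bound_general u hu n h2nu x a s p π σ ε δ hεu hδu hsn hp hπ hs hσ
end

section
/- Coefficientwise expansion of the computed Horner value: Let u be a real number with 0 < u, let n be a positive integer with 2n·u < 1, let x, a_0, …, a_n be real numbers, and let r_0, …, r_n satisfy r_n = a_n and, for every i = n−1, …, 0, r_i = (r_{i+1}·x·(1+ε_i) + a_i)·(1+δ_i) with |ε_i| ≤ u, |δ_i| ≤ u. Then there exist real numbers θ^{(0)}, …, θ^{(n)} with |θ^{(i)}| ≤ γ_{2i+1} for i = 0, …, n−1 and |θ^{(n)}| ≤ γ_{2n}, such that r_0 = (1+θ^{(n)}) a_n x^n + Σ_{i=0}^{n−1} (1+θ^{(i)}) a_i x^i. -/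
/-- Higham-style bound: a product squeezed between `(1-u)^k` and `(1+u)^k`
differs from 1 by at most `k u / (1 - k u)`. -/
lemma theta_bound_of_pow_bounds (u : ℝ) (hu : 0 < u) (k : ℕ)
    (hk : (k : ℝ) * u < 1) (P : ℝ)
    (hlo : (1 - u) ^ k ≤ P) (hhi : P ≤ (1 + u) ^ k) :
    |P - 1| ≤ (k : ℝ) * u / (1 - (k : ℝ) * u) := by
  have hden : 0 < 1 - (k : ℝ) * u := by linarith
  rcases Nat.eq_zero_or_pos k with hk0 | hkpos
  · subst hk0
    simp only [pow_zero, Nat.cast_zero] at *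
    have : P = 1 := le_antisymm hhi hlo
    simp [this]
  · have hk1 : (1 : ℝ) ≤ (k : ℝ) := by exact_mod_cast hkpos
    have hu1 : u < 1 := by nlinarith
    have hbern : (1 : ℝ) - (k : ℝ) * u ≤ (1 - u) ^ k := by
      have := one_add_mul_le_pow (by linarith : (-2 : ℝ) ≤ -u) k
      have h' : 1 + (k : ℝ) * (-u) ≤ (1 + -u) ^ k := this
      calc (1 : ℝ) - (k:ℝ) * u = 1 + (k:ℝ) * (-u) := by ring
        _ ≤ (1 + -u) ^ k := h'
        _ = (1 - u) ^ k := by ring_nf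
    have hsq : (1 + u) ^ k * (1 - u) ^ k ≤ 1 := by
      rw [← mul_pow]
      have h1 : (1 + u) * (1 - u) = 1 - u ^ 2 := by ring
      rw [h1]
      apply pow_le_one₀ (by nlinarith) (by nlinarith)
    have hpownn : (0 : ℝ) ≤ (1 + u) ^ k := by positivity
    have hup : P * (1 - (k : ℝ) * u) ≤ 1 := by
      calc P * (1 - (k:ℝ)*u) ≤ (1+u)^k * (1 - (k:ℝ)*u) := by
            apply mul_le_mul_of_nonneg_right hhi (le_of_lt hden)
        _ ≤ (1+u)^k * (1-u)^k := by
            apply mul_le_mul_of_nonneg_left hbern hpownn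
        _ ≤ 1 := hsq
    rw [abs_le]
    constructor
    · rw [neg_le, le_div_iff₀ hden]
      have h1 : 1 - (k:ℝ)*u ≤ P := le_trans hbern hlo
      have h2 : (1 - P) * (1 - (k:ℝ)*u) ≤ ((k:ℝ)*u) * (1 - (k:ℝ)*u) :=
        mul_le_mul_of_nonneg_right (by linarith) hden.le
      nlinarith [mul_nonneg (mul_nonneg (Nat.cast_nonneg k : (0:ℝ) ≤ k) hu.le)
        (mul_nonneg (Nat.cast_nonneg k : (0:ℝ) ≤ k) hu.le)]
    · rw [le_div_iff₀ hden]
      nlinarith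

/-- Bounds for the product of `2m` perturbation factors. -/
lemma prod_two_bounds (u : ℝ) (hu : 0 < u) (hu1 : u ≤ 1) (m : ℕ) (ε δ : ℕ → ℝ)
    (hε : ∀ j < m, |ε j| ≤ u) (hδ : ∀ j < m, |δ j| ≤ u) :
    (1 - u) ^ (2 * m) ≤ (∏ j ∈ Finset.range m, (1 + ε j) * (1 + δ j)) ∧
    (∏ j ∈ Finset.range m, (1 + ε j) * (1 + δ j)) ≤ (1 + u) ^ (2 * m) := by
  have hfac : ∀ j < m, (1 - u)^2 ≤ (1 + ε j) * (1 + δ j) ∧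
      (1 + ε j) * (1 + δ j) ≤ (1 + u)^2 := by
    intro j hj
    obtain ⟨he1, he2⟩ := abs_le.mp (hε j hj)
    obtain ⟨hd1, hd2⟩ := abs_le.mp (hδ j hj)
    constructor
    · nlinarith
    · nlinarith
  constructor
  · rw [pow_mul]
    have := Finset.prod_le_prod (s := Finset.range m)
      (f := fun _ => (1 - u)^2) (g := fun j => (1 + ε j) * (1 + δ j))
      (fun j hj => by positivity)
      (fun j hj => (hfac j (Finset.mem_range.mp hj)).1)
    simpa using this
  · rw [pow_mul]
    have := Finset.prod_le_prod (s := Finset.range m)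
      (f := fun j => (1 + ε j) * (1 + δ j)) (g := fun _ => (1 + u)^2)
      (fun j hj => by
        obtain ⟨he1, _⟩ := abs_le.mp (hε j (Finset.mem_range.mp hj))
        obtain ⟨hd1, _⟩ := abs_le.mp (hδ j (Finset.mem_range.mp hj))
        show (0:ℝ) ≤ (1 + ε j) * (1 + δ j)
        nlinarith)
      (fun j hj => (hfac j (Finset.mem_range.mp hj)).2)
    simpa using this

/-- Exact expansion of the Horner recurrence. -/
lemma horner_expand (n : ℕ) (x : ℝ) (a r ε δ : ℕ → ℝ)
    (hrn : r n = a n)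
    (hrec : ∀ i < n, r i = (r (i + 1) * x * (1 + ε i) + a i) * (1 + δ i)) :
    ∀ m, m ≤ n → r (n - m) =
      a n * x ^ m * (∏ j ∈ Finset.Ico (n - m) n, (1 + ε j) * (1 + δ j)) +
      ∑ i ∈ Finset.Ico (n - m) n,
        (1 + δ i) * (∏ j ∈ Finset.Ico (n - m) i, (1 + ε j) * (1 + δ j)) * a i
          * x ^ (i - (n - m)) := by
  intro m
  induction m with
  | zero => intro _; simp [hrn]
  | succ m ih =>
    intro hm
    have hk1 : n - (m + 1) + 1 = n - m := by omega
    have hkn : n - (m + 1) < n := by omega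
    set k := n - (m + 1) with hk
    have ihk := ih (by omega)
    rw [← hk1] at ihk
    rw [hrec k hkn, ihk]
    rw [Finset.prod_eq_prod_Ico_succ_bot hkn, Finset.sum_eq_sum_Ico_succ_bot hkn]
    have hterm : ∑ i ∈ Finset.Ico (k+1) n,
        (1 + δ i) * (∏ j ∈ Finset.Ico k i, (1 + ε j) * (1 + δ j)) * a i * x ^ (i - k)
      = ∑ i ∈ Finset.Ico (k+1) n,
        ((1 + δ i) * (∏ j ∈ Finset.Ico (k+1) i, (1 + ε j) * (1 + δ j)) * a i
          * x ^ (i - (k+1))) * (x * (1 + ε k) * (1 + δ k)) := by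
      refine Finset.sum_congr rfl fun i hi => ?_
      rw [Finset.mem_Ico] at hi
      rw [Finset.prod_eq_prod_Ico_succ_bot (by omega : k < i)]
      rw [show i - k = (i - (k+1)) + 1 from by omega, pow_succ]
      ring
    rw [hterm, ← Finset.sum_mul]
    simp only [Finset.Ico_self, Finset.prod_empty, Nat.sub_self, pow_zero, pow_succ]
    ring

/-- Coefficientwise expansion of the computed Horner value: each coefficient is
perturbed by a relative factor `1 + θ⁽ⁱ⁾` with `|θ⁽ⁱ⁾| ≤ γ_{2i+1}` for `i < n`
and `|θ⁽ⁿ⁾| ≤ γ_{2n}`, where `γ_k = k·u/(1 − k·u)`. -/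
theorem horner_coefficientwise_expansion
    (u : ℝ) (hu : 0 < u) (n : ℕ) (hn : 1 ≤ n) (h2nu : 2 * (n : ℝ) * u < 1)
    (x : ℝ) (a r ε δ : ℕ → ℝ)
    (hεu : ∀ i < n, |ε i| ≤ u) (hδu : ∀ i < n, |δ i| ≤ u)
    (hrn : r n = a n)
    (hrec : ∀ i < n, r i = (r (i + 1) * x * (1 + ε i) + a i) * (1 + δ i)) :
    ∃ θ : ℕ → ℝ,
      (∀ i < n, |θ i| ≤ (2 * (i : ℝ) + 1) * u / (1 - (2 * (i : ℝ) + 1) * u)) ∧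
      |θ n| ≤ 2 * (n : ℝ) * u / (1 - 2 * (n : ℝ) * u) ∧
      r 0 = (1 + θ n) * a n * x ^ n +
        ∑ i ∈ Finset.range n, (1 + θ i) * a i * x ^ i := by
  have hn1 : (1 : ℝ) ≤ (n : ℝ) := by exact_mod_cast hn
  have hu1 : u ≤ 1 := by nlinarith
  refine ⟨fun i => if i = n then (∏ j ∈ Finset.range n, (1 + ε j) * (1 + δ j)) - 1
    else (1 + δ i) * (∏ j ∈ Finset.range i, (1 + ε j) * (1 + δ j)) - 1, ?_, ?_, ?_⟩
  · intro i hi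
    have hin : (i : ℝ) + 1 ≤ (n : ℝ) := by exact_mod_cast hi
    simp only [Nat.ne_of_lt hi, if_false]
    obtain ⟨hlo, hhi⟩ := prod_two_bounds u hu hu1 i ε δ
      (fun j hj => hεu j (lt_trans hj hi)) (fun j hj => hδu j (lt_trans hj hi))
    obtain ⟨hd1, hd2⟩ := abs_le.mp (hδu i hi)
    have hPnn : 0 ≤ ∏ j ∈ Finset.range i, (1 + ε j) * (1 + δ j) :=
      le_trans (pow_nonneg (by linarith) _) hlo
    have hk : ((2 * i + 1 : ℕ) : ℝ) * u < 1 := by push_cast; nlinarith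
    have hb := theta_bound_of_pow_bounds u hu (2 * i + 1) hk
      ((1 + δ i) * ∏ j ∈ Finset.range i, (1 + ε j) * (1 + δ j))
      (by
        calc (1 - u) ^ (2 * i + 1) = (1 - u) ^ (2 * i) * (1 - u) := pow_succ _ _
          _ ≤ (1 + δ i) * ∏ j ∈ Finset.range i, (1 + ε j) * (1 + δ j) := by
            rw [mul_comm ((1 - u) ^ (2 * i))]
            exact mul_le_mul (by linarith) hlo (pow_nonneg (by linarith) _) (by linarith))
      (by
        calc (1 + δ i) * ∏ j ∈ Finset.range i, (1 + ε j) * (1 + δ j)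
            ≤ (1 + u) * (1 + u) ^ (2 * i) :=
              mul_le_mul (by linarith) hhi hPnn (by linarith)
          _ = (1 + u) ^ (2 * i + 1) := by rw [pow_succ]; ring)
    have hcast : ((2 * i + 1 : ℕ) : ℝ) = 2 * (i : ℝ) + 1 := by push_cast; ring
    rw [hcast] at hb
    exact hb
  · simp only [if_pos rfl]
    obtain ⟨hlo, hhi⟩ := prod_two_bounds u hu hu1 n ε δ hεu hδu
    have hk : ((2 * n : ℕ) : ℝ) * u < 1 := by push_cast; nlinarith
    have hb := theta_bound_of_pow_bounds u hu (2 * n) hk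
      (∏ j ∈ Finset.range n, (1 + ε j) * (1 + δ j)) hlo hhi
    have hcast : ((2 * n : ℕ) : ℝ) = 2 * (n : ℝ) := by push_cast; ring
    rw [hcast] at hb
    exact hb
  · have hex := horner_expand n x a r ε δ hrn hrec n le_rfl
    simp only [Nat.sub_self, Nat.sub_zero, ← Finset.range_eq_Ico] at hex
    rw [hex]
    congr 1
    · beta_reduce
      rw [if_pos rfl]; ring
    · refine Finset.sum_congr rfl fun i hi => ?_
      have hine : i ≠ n := Nat.ne_of_lt (Finset.mem_range.mp hi)
      beta_reduce
      rw [if_neg hine]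
      ring
end

section
/- Accuracy of the compensated Horner algorithm, modular form (Theorem 3): Let u be a real number with 0 < u, let n be a positive integer with 2n·u < 1, and let P, P̃, r̂, c, ĉ, r̄ be real numbers with P̃ ≥ 0. Suppose that P = r̂ + c, that |ĉ − c| ≤ γ_{2n−1}·γ_{2n}·P̃, and that r̄ = (r̂ + ĉ)·(1+ε) for some ε with |ε| ≤ u. Then |r̄ − P| ≤ u·|P| + γ_{2n}²·P̃. -/
/-!
Rounding the final sum `r̂ + ĉ` costs a relative error `u` on `r̂ + ĉ = P + (ĉ - c)`, so
`|r̄ - P| ≤ u |P| + (1 + u) |ĉ - c|`. The factor `1 + u` is then absorbed into the error bound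
of the correcting term through `(1 + u) γ_{2n-1} ≤ γ_{2n}`.
-/

/-- The paper's `γ_k`, with a real index `k`. -/
noncomputable def roundingGamma (u k : ℝ) : ℝ := k * u / (1 - k * u)

section RoundingGamma

variable {u k : ℝ}

theorem roundingGamma_nonneg (hu : 0 ≤ u) (hk : 0 ≤ k) (hku : k * u < 1) :
    0 ≤ roundingGamma u k :=
  div_nonneg (mul_nonneg hk hu) (sub_pos.mpr hku).le

theorem one_add_mul_roundingGamma_sub_one_le (hu : 0 ≤ u) (hk : 0 ≤ k) (hku : k * u < 1) :
    (1 + u) * roundingGamma u (k - 1) ≤ roundingGamma u k := by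
  have hden : 0 < 1 - k * u := sub_pos.mpr hku
  have hden' : 0 < 1 - (k - 1) * u := by nlinarith
  unfold roundingGamma
  rw [mul_div_assoc', div_le_div_iff₀ hden' hden]
  -- after dividing by `u`: `(1 - k u)(u (k - 1) - 1) ≤ k u`, and `u (k - 1) < 1`
  nlinarith [mul_nonneg hu (mul_nonneg hden.le (by nlinarith : 0 ≤ 1 - u * (k - 1))),
    mul_nonneg hu (mul_nonneg hk hu)]

end RoundingGamma

theorem abs_rounded_corrected_sum_sub_le {u P rhat c chat rbar ε : ℝ} (hP : P = rhat + c)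
    (hε : |ε| ≤ u) (hrbar : rbar = (rhat + chat) * (1 + ε)) :
    |rbar - P| ≤ u * |P| + (1 + u) * |chat - c| := by
  have h1ε : |1 + ε| ≤ 1 + u := (abs_add_le 1 ε).trans (by rw [abs_one]; linarith)
  calc |rbar - P| = |ε * P + (1 + ε) * (chat - c)| := by rw [hrbar, hP]; ring_nf
    _ ≤ |ε| * |P| + |1 + ε| * |chat - c| := by
      rw [← abs_mul, ← abs_mul]; exact abs_add_le _ _
    _ ≤ u * |P| + (1 + u) * |chat - c| := by gcongr

theorem compensated_horner_accuracy_general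
    (u : ℝ) (n : ℕ) (h2nu : 2 * (n : ℝ) * u < 1)
    (P Ptilde rhat c chat rbar ε : ℝ) (hPt : 0 ≤ Ptilde)
    (hP : P = rhat + c)
    (hc : |chat - c| ≤
      ((2 * (n : ℝ) - 1) * u / (1 - (2 * (n : ℝ) - 1) * u)) *
        (2 * (n : ℝ) * u / (1 - 2 * (n : ℝ) * u)) * Ptilde)
    (hε : |ε| ≤ u)
    (hrbar : rbar = (rhat + chat) * (1 + ε)) :
    |rbar - P| ≤ u * |P| +
      (2 * (n : ℝ) * u / (1 - 2 * (n : ℝ) * u)) ^ 2 * Ptilde := by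
  have hu : 0 ≤ u := (abs_nonneg ε).trans hε
  have h2n : (0 : ℝ) ≤ 2 * n := by positivity
  have hγ : 0 ≤ roundingGamma u (2 * n) := roundingGamma_nonneg hu h2n h2nu
  have hcorr : (1 + u) * |chat - c| ≤ roundingGamma u (2 * n) ^ 2 * Ptilde :=
    calc (1 + u) * |chat - c|
        ≤ (1 + u) * (roundingGamma u (2 * n - 1) * roundingGamma u (2 * n) * Ptilde) := by
          gcongr; exact hc
      _ = (1 + u) * roundingGamma u (2 * n - 1) * (roundingGamma u (2 * n) * Ptilde) := by ring
      _ ≤ roundingGamma u (2 * n) * (roundingGamma u (2 * n) * Ptilde) := by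
          gcongr
          exact one_add_mul_roundingGamma_sub_one_le hu h2n h2nu
      _ = roundingGamma u (2 * n) ^ 2 * Ptilde := by ring
  unfold roundingGamma at hcorr
  linarith [abs_rounded_corrected_sum_sub_le hP hε hrbar]

/-- Accuracy of the compensated Horner algorithm, modular form (Theorem 3).
Here `γ_k = k·u/(1 − k·u)`, `P` is the exact polynomial value, `P̃` the
absolute-coefficient evaluation, `r̂` the Horner result, `c` the exact error,
`ĉ` the computed correcting term and `r̄` the compensated result. -/
theorem compensated_horner_accuracy
    (u : ℝ) (hu : 0 < u) (n : ℕ) (hn : 1 ≤ n) (h2nu : 2 * (n : ℝ) * u < 1)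
    (P Ptilde rhat c chat rbar ε : ℝ) (hPt : 0 ≤ Ptilde)
    (hP : P = rhat + c)
    (hc : |chat - c| ≤
      ((2 * (n : ℝ) - 1) * u / (1 - (2 * (n : ℝ) - 1) * u)) *
        (2 * (n : ℝ) * u / (1 - 2 * (n : ℝ) * u)) * Ptilde)
    (hε : |ε| ≤ u)
    (hrbar : rbar = (rhat + chat) * (1 + ε)) :
    |rbar - P| ≤ u * |P| +
      (2 * (n : ℝ) * u / (1 - 2 * (n : ℝ) * u)) ^ 2 * Ptilde :=
  compensated_horner_accuracy_general u n h2nu P Ptilde rhat c chat rbar ε hPt hP hc hε hrbar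
end

section
/- Accuracy of the compensated Horner algorithm, full form in the standard model: Let u be a real number with 0 < u, let n be a positive integer with 2n·u < 1, and let x, a_0, …, a_n be real numbers. Suppose: (1) s_n = a_n and, for i = n−1, …, 0, p_i = s_{i+1}·x·(1+ε_i), π_i = s_{i+1}·x − p_i, s_i = (p_i + a_i)·(1+δ_i), σ_i = (p_i + a_i) − s_i, with |ε_i|, |δ_i| ≤ u; (2) w_i = (π_i + σ_i)·(1+μ_i) with |μ_i| ≤ u for i = 0, …, n−1, c_{n−1} = w_{n−1} and, for i = n−2, …, 0, c_i = (c_{i+1}·x·(1+φ_i) + w_i)·(1+ψ_i) with |φ_i|, |ψ_i| ≤ u, and ĉ = c_0; (3) r̄ = (s_0 + ĉ)·(1+ε) with |ε| ≤ u. Then |r̄ − Σ_{i=0}^n a_i x^i| ≤ u·|Σ_{i=0}^n a_i x^i| + γ_{2n}²·Σ_{i=0}^n |a_i| |x|^i. -/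
set_option maxHeartbeats 1000000

open Finset

private lemma aux_pow_bound (u : ℝ) (hu : 0 ≤ u) : ∀ k : ℕ, (1+u)^k * (1 - k*u) ≤ 1 := by
  intro k
  induction k with
  | zero => simp
  | succ k ih =>
    have h1 : (0:ℝ) ≤ (1+u)^k := by positivity
    have h2 : (1+u)^(k+1) * (1 - (k+1:ℕ)*u) = (1+u)^k * (1 - k*u) - (1+u)^k * (((k:ℝ)+1)*u^2) := by
      push_cast; ring
    nlinarith [mul_nonneg h1 (mul_nonneg (by positivity : (0:ℝ) ≤ ((k:ℝ)+1)) (sq_nonneg u))]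



private lemma horner_round_err (u x : ℝ) (hu : 0 ≤ u) :
    ∀ (m : ℕ) (b c φ ψ μ : ℕ → ℝ),
    (∀ i ≤ m, |μ i| ≤ u) → (∀ i < m, |φ i| ≤ u) → (∀ i < m, |ψ i| ≤ u) →
    c m = b m * (1 + μ m) →
    (∀ i < m, c i = (c (i+1) * x * (1 + φ i) + b i * (1 + μ i)) * (1 + ψ i)) →
    |c 0 - ∑ i ∈ range (m+1), b i * x ^ i| ≤
      ((1+u)^(2*m+1) - 1) * ∑ i ∈ range (m+1), |b i| * |x| ^ i := by
  intro m
  induction m with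
  | zero =>
    intro b c φ ψ μ hμ _ _ hcm _
    simp only [zero_add, range_one, sum_singleton, pow_zero, mul_one, mul_zero]
    rw [hcm]
    have h : b 0 * (1 + μ 0) - b 0 = b 0 * μ 0 := by ring
    rw [h, abs_mul, pow_one]
    have := hμ 0 le_rfl
    nlinarith [abs_nonneg (b 0), abs_nonneg (μ 0)]
  | succ m ih =>
    intro b c φ ψ μ hμ hφ hψ hcm hrec
    have IH := ih (fun i => b (i+1)) (fun i => c (i+1)) (fun i => φ (i+1))
      (fun i => ψ (i+1)) (fun i => μ (i+1))
      (fun i hi => hμ (i+1) (by omega)) (fun i hi => hφ (i+1) (by omega))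
      (fun i hi => hψ (i+1) (by omega)) hcm
      (fun i hi => hrec (i+1) (by omega))
    set A := ∑ i ∈ range (m+1), b (i+1) * x ^ i with hA
    set B := ∑ i ∈ range (m+1), |b (i+1)| * |x| ^ i with hB
    norm_num at IH
    have hB0 : 0 ≤ B := by
      apply Finset.sum_nonneg; intro i _; positivity
    have hAB : |A| ≤ B := by
      calc |A| ≤ ∑ i ∈ range (m+1), |b (i+1) * x ^ i| := Finset.abs_sum_le_sum_abs _ _
        _ = B := by
          refine Finset.sum_congr rfl fun i _ => ?_
          rw [abs_mul, abs_pow]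
    have hsum : ∑ i ∈ range (m+1+1), b i * x ^ i = b 0 + x * A := by
      rw [Finset.sum_range_succ', Finset.mul_sum]
      have h : ∀ i ∈ range (m+1), b (i+1) * x ^ (i+1) = x * (b (i+1) * x ^ i) := by
        intro i _; ring
      rw [Finset.sum_congr rfl h]
      ring
    have habs : ∑ i ∈ range (m+1+1), |b i| * |x| ^ i = |b 0| + |x| * B := by
      rw [Finset.sum_range_succ', Finset.mul_sum]
      have h : ∀ i ∈ range (m+1), |b (i+1)| * |x| ^ (i+1) = |x| * (|b (i+1)| * |x| ^ i) := by
        intro i _; ring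
      rw [Finset.sum_congr rfl h]
      ring
    have hrec0 := hrec 0 (by omega)
    have key : c 0 - (b 0 + x * A) =
        x * ((1+φ 0) * (1+ψ 0)) * (c 1 - A) + x * A * ((1+φ 0)*(1+ψ 0) - 1)
          + b 0 * ((1+μ 0)*(1+ψ 0) - 1) := by
      rw [hrec0]; ring
    have hφ0 := hφ 0 (by omega)
    have hψ0 := hψ 0 (by omega)
    have hμ0 := hμ 0 (by omega)
    have e1 : |1 + φ 0| ≤ 1 + u := (abs_add_le 1 (φ 0)).trans (by simpa using hφ0)
    have e2 : |1 + ψ 0| ≤ 1 + u := (abs_add_le 1 (ψ 0)).trans (by simpa using hψ0)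
    have efs : |(1+φ 0) * (1+ψ 0)| ≤ (1+u)^2 := by
      rw [abs_mul, sq]
      exact mul_le_mul e1 e2 (abs_nonneg _) (by linarith)
    have e3 : |(1+φ 0)*(1+ψ 0) - 1| ≤ (1+u)^2 - 1 := by
      have h : (1+φ 0)*(1+ψ 0) - 1 = φ 0 + ψ 0 + φ 0 * ψ 0 := by ring
      rw [h]
      calc |φ 0 + ψ 0 + φ 0 * ψ 0| ≤ |φ 0 + ψ 0| + |φ 0 * ψ 0| := abs_add_le _ _
        _ ≤ (|φ 0| + |ψ 0|) + |φ 0| * |ψ 0| := by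
            rw [abs_mul]; gcongr; exact abs_add_le _ _
        _ ≤ (1+u)^2 - 1 := by nlinarith [abs_nonneg (φ 0), abs_nonneg (ψ 0)]
    have e4 : |(1+μ 0)*(1+ψ 0) - 1| ≤ (1+u)^2 - 1 := by
      have h : (1+μ 0)*(1+ψ 0) - 1 = μ 0 + ψ 0 + μ 0 * ψ 0 := by ring
      rw [h]
      calc |μ 0 + ψ 0 + μ 0 * ψ 0| ≤ |μ 0 + ψ 0| + |μ 0 * ψ 0| := abs_add_le _ _
        _ ≤ (|μ 0| + |ψ 0|) + |μ 0| * |ψ 0| := by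
            rw [abs_mul]; gcongr; exact abs_add_le _ _
        _ ≤ (1+u)^2 - 1 := by nlinarith [abs_nonneg (μ 0), abs_nonneg (ψ 0)]
    rw [hsum, habs, key]
    have hE1 : (1:ℝ) ≤ (1+u)^(2*m+1) := one_le_pow₀ (by linarith)
    have t1 : |(1+φ 0)*(1+ψ 0)| * |c 1 - A| ≤ (1+u)^2 * (((1+u)^(2*m+1) - 1) * B) :=
      mul_le_mul efs IH (abs_nonneg _) (by positivity)
    have t2 : |A| * |(1+φ 0)*(1+ψ 0) - 1| ≤ B * ((1+u)^2 - 1) :=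
      mul_le_mul hAB e3 (abs_nonneg _) hB0
    have t3 : |b 0| * |(1+μ 0)*(1+ψ 0) - 1| ≤ |b 0| * ((1+u)^2 - 1) :=
      mul_le_mul_of_nonneg_left e4 (abs_nonneg _)
    have s1 : |x * ((1+φ 0) * (1+ψ 0)) * (c 1 - A)| = |x| * (|(1+φ 0)*(1+ψ 0)| * |c 1 - A|) := by
      rw [abs_mul, abs_mul, mul_assoc]
    have s2 : |x * A * ((1+φ 0)*(1+ψ 0) - 1)| = |x| * (|A| * |(1+φ 0)*(1+ψ 0) - 1|) := by
      rw [abs_mul, abs_mul, mul_assoc]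
    have s3 : |b 0 * ((1+μ 0)*(1+ψ 0) - 1)| = |b 0| * |(1+μ 0)*(1+ψ 0) - 1| := abs_mul _ _
    have hx0 : (0:ℝ) ≤ |x| := abs_nonneg x
    have tri : |x * ((1+φ 0) * (1+ψ 0)) * (c 1 - A) + x * A * ((1+φ 0)*(1+ψ 0) - 1)
          + b 0 * ((1+μ 0)*(1+ψ 0) - 1)|
        ≤ |x * ((1+φ 0) * (1+ψ 0)) * (c 1 - A)| + |x * A * ((1+φ 0)*(1+ψ 0) - 1)|
          + |b 0 * ((1+μ 0)*(1+ψ 0) - 1)| :=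
      (abs_add_le _ _).trans (by gcongr; exact abs_add_le _ _)
    have F1 : |x * ((1+φ 0) * (1+ψ 0)) * (c 1 - A)|
        ≤ |x| * ((1+u)^2 * (((1+u)^(2*m+1) - 1) * B)) := by
      rw [s1]; exact mul_le_mul_of_nonneg_left t1 hx0
    have F2 : |x * A * ((1+φ 0)*(1+ψ 0) - 1)| ≤ |x| * (B * ((1+u)^2 - 1)) := by
      rw [s2]; exact mul_le_mul_of_nonneg_left t2 hx0
    have F3 : |b 0 * ((1+μ 0)*(1+ψ 0) - 1)| ≤ |b 0| * ((1+u)^2 - 1) := by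
      rw [s3]; exact t3
    have hVE : (1+u)^(2*(m+1)+1) = (1+u)^2 * (1+u)^(2*m+1) := by
      rw [← pow_add]; congr 1; ring
    rw [hVE]
    have cert : 0 ≤ |b 0| * ((1+u)^2 * ((1+u)^(2*m+1) - 1)) :=
      mul_nonneg (abs_nonneg (b 0)) (mul_nonneg (by positivity) (by linarith))
    clear_value A B
    clear ih hrec hμ hφ hψ hcm hrec0 key hsum habs s1 s2 s3 IH hAB t1 t2 t3 e1 e2 e3 e4 efs hVE
    linarith [tri, F1, F2, F3, cert]



private lemma horner_eval_bound (u x : ℝ) (hu : 0 ≤ u) :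
    ∀ (m : ℕ) (a s p ε δ : ℕ → ℝ),
    (∀ i < m, |ε i| ≤ u) → (∀ i < m, |δ i| ≤ u) → s m = a m →
    (∀ i < m, p i = s (i+1) * x * (1 + ε i)) →
    (∀ i < m, s i = (p i + a i) * (1 + δ i)) →
    |s 0| ≤ (1+u)^(2*m) * ∑ i ∈ range (m+1), |a i| * |x| ^ i := by
  intro m
  induction m with
  | zero =>
    intro a s p ε δ _ _ hsm _ _
    simp only [mul_zero, pow_zero, zero_add, range_one, sum_singleton, mul_one, one_mul, hsm]
    exact le_refl _
  | succ m ih =>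
    intro a s p ε δ hε hδ hsm hp hs
    have IH := ih (fun i => a (i+1)) (fun i => s (i+1)) (fun i => p (i+1))
      (fun i => ε (i+1)) (fun i => δ (i+1))
      (fun i hi => hε (i+1) (by omega)) (fun i hi => hδ (i+1) (by omega)) hsm
      (fun i hi => hp (i+1) (by omega)) (fun i hi => hs (i+1) (by omega))
    set B := ∑ i ∈ range (m+1), |a (i+1)| * |x| ^ i with hB
    norm_num at IH
    have hB0 : 0 ≤ B := by apply Finset.sum_nonneg; intro i _; positivity
    have habs : ∑ i ∈ range (m+1+1), |a i| * |x| ^ i = |a 0| + |x| * B := by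
      rw [Finset.sum_range_succ', Finset.mul_sum]
      have h : ∀ i ∈ range (m+1), |a (i+1)| * |x| ^ (i+1) = |x| * (|a (i+1)| * |x| ^ i) := by
        intro i _; ring
      rw [Finset.sum_congr rfl h]
      ring
    rw [habs]
    have hs0 := hs 0 (by omega)
    have hp0 := hp 0 (by omega)
    have hε0 := hε 0 (by omega)
    have hδ0 := hδ 0 (by omega)
    have e1 : |1 + ε 0| ≤ 1 + u := (abs_add_le 1 (ε 0)).trans (by simpa using hε0)
    have e2 : |1 + δ 0| ≤ 1 + u := (abs_add_le 1 (δ 0)).trans (by simpa using hδ0)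
    have hx0 : (0:ℝ) ≤ |x| := abs_nonneg x
    have hxB : |x| * |s 1| ≤ |x| * ((1+u)^(2*m) * B) := mul_le_mul_of_nonneg_left IH hx0
    have hps : |p 0| ≤ (1+u) * (|s 1| * |x|) := by
      rw [hp0, abs_mul, abs_mul]
      nlinarith [abs_nonneg (s 1), abs_nonneg x, mul_nonneg (abs_nonneg (s 1)) (abs_nonneg x)]
    have hs0b : |s 0| ≤ ((1+u) * (|s 1| * |x|) + |a 0|) * (1+u) := by
      rw [hs0, abs_mul]
      have h1 : |p 0 + a 0| ≤ |p 0| + |a 0| := abs_add_le _ _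
      nlinarith [abs_nonneg (p 0 + a 0), abs_nonneg (a 0), abs_nonneg (p 0),
        mul_nonneg (abs_nonneg (s 1)) (abs_nonneg x)]
    have hVE : (1+u)^(2*(m+1)) = (1+u)^2 * (1+u)^(2*m) := by
      rw [← pow_add]; congr 1; ring
    rw [hVE]
    have hE1 : (1:ℝ) ≤ (1+u)^(2*m) := one_le_pow₀ (by linarith)
    have cert1 : |s 1| * |x| ≤ ((1+u)^(2*m) * B) * |x| :=
      mul_le_mul_of_nonneg_right IH hx0
    clear_value B
    clear ih hp hs hε hδ hs0 hp0 IH hxB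
    have k1 : |s 0| ≤ (1+u)*(1+u)*(|s 1| * |x|) + (1+u)*|a 0| := by linarith [hs0b]
    have k2 : (1+u)*(1+u)*(|s 1| * |x|) ≤ (1+u)*(1+u)*((1+u)^(2*m)*B*|x|) :=
      mul_le_mul_of_nonneg_left cert1 (by positivity)
    have k3 : (1+u)*|a 0| ≤ (1+u)^2*(1+u)^(2*m)*|a 0| := by
      have h1 : (0:ℝ) ≤ (1+u)^2*(1+u)^(2*m) - (1+u) := by
        nlinarith [mul_nonneg (sq_nonneg (1+u)) (sub_nonneg.2 hE1)]
      nlinarith [mul_nonneg h1 (abs_nonneg (a 0))]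
    linarith [k1, k2, k3]




/-- Accuracy of the compensated Horner algorithm, full form in the standard
model. Here `γ_{2n} = 2n·u/(1 − 2n·u)`. The hypotheses encode the error free
Horner transformation (producing `s 0` and the exact rounding errors `π`, `σ`),
the rounded Horner evaluation `c 0` of the error polynomial, and the final
rounded addition producing `rbar`. -/
theorem compensated_horner_accuracy_full
    (u : ℝ) (hu : 0 < u) (n : ℕ) (hn : 1 ≤ n) (h2nu : 2 * (n : ℝ) * u < 1)
    (x : ℝ) (a s p π σ w c ε δ μ φ ψ : ℕ → ℝ) (chat rbar ε' : ℝ)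
    -- (1) EFT Horner
    (hεu : ∀ i < n, |ε i| ≤ u) (hδu : ∀ i < n, |δ i| ≤ u)
    (hsn : s n = a n)
    (hp : ∀ i < n, p i = s (i + 1) * x * (1 + ε i))
    (hπ : ∀ i < n, π i = s (i + 1) * x - p i)
    (hs : ∀ i < n, s i = (p i + a i) * (1 + δ i))
    (hσ : ∀ i < n, σ i = (p i + a i) - s i)
    -- (2) rounded Horner evaluation of the error polynomial
    (hμu : ∀ i < n, |μ i| ≤ u)
    (hw : ∀ i < n, w i = (π i + σ i) * (1 + μ i))
    (hcn : c (n - 1) = w (n - 1))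
    (hφu : ∀ i < n - 1, |φ i| ≤ u) (hψu : ∀ i < n - 1, |ψ i| ≤ u)
    (hcrec : ∀ i < n - 1, c i = (c (i + 1) * x * (1 + φ i) + w i) * (1 + ψ i))
    (hchat : chat = c 0)
    -- (3) final rounded addition
    (hε' : |ε'| ≤ u)
    (hrbar : rbar = (s 0 + chat) * (1 + ε')) :
    |rbar - ∑ i ∈ Finset.range (n + 1), a i * x ^ i| ≤
      u * |∑ i ∈ Finset.range (n + 1), a i * x ^ i| +
        (2 * (n : ℝ) * u / (1 - 2 * (n : ℝ) * u)) ^ 2 *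
          ∑ i ∈ Finset.range (n + 1), |a i| * |x| ^ i := by
  have hu0 : (0:ℝ) ≤ u := le_of_lt hu
  set P := ∑ i ∈ Finset.range (n + 1), a i * x ^ i with hP
  set T := ∑ i ∈ Finset.range (n + 1), |a i| * |x| ^ i with hT
  set E := ∑ i ∈ Finset.range n, (π i + σ i) * x ^ i with hE
  set S := ∑ i ∈ Finset.range n, |π i + σ i| * |x| ^ i with hS
  have hT0 : 0 ≤ T := Finset.sum_nonneg fun i _ => by positivity
  have hS0 : 0 ≤ S := Finset.sum_nonneg fun i _ => by positivity
  -- Step 1: EFT identity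
  have htel : ∑ i ∈ Finset.range n, (s (i+1) * x^(i+1) - s i * x^i)
      = s n * x^n - s 0 * x^0 := Finset.sum_range_sub (fun i => s i * x^i) n
  have hEFT : s 0 + E = P := by
    have hps : ∀ i ∈ Finset.range n, (π i + σ i) * x ^ i
        = (s (i+1) * x^(i+1) - s i * x^i) + a i * x^i := by
      intro i hi
      have hi' := Finset.mem_range.1 hi
      rw [hπ i hi', hσ i hi']
      ring
    rw [hE, Finset.sum_congr rfl hps, Finset.sum_add_distrib, htel, hP,
      Finset.sum_range_succ, hsn]
    ring
  -- Step 2: rounded Horner of the error polynomial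
  have hn1 : n - 1 + 1 = n := by omega
  have hCE : |chat - E| ≤ ((1+u)^(2*(n-1)+1) - 1) * S := by
    have h := horner_round_err u x hu0 (n-1) (fun i => π i + σ i) c φ ψ μ
      (fun i hi => hμu i (by omega)) hφu hψu
      (by rw [hcn, hw (n-1) (by omega)])
      (fun i hi => by rw [hcrec i hi, hw i (by omega)])
    rw [hn1] at h
    rw [hchat, hE, hS]
    exact h
  -- Step 3: bound on |s (k+1)| * |x|^(k+1)
  have hskb : ∀ k, k < n → |s (k+1)| * |x|^(k+1) ≤ (1+u)^(2*(n-(k+1))) * T := by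
    intro k hk
    have h := horner_eval_bound u x hu0 (n-(k+1)) (fun i => a (k+1+i)) (fun i => s (k+1+i))
      (fun i => p (k+1+i)) (fun i => ε (k+1+i)) (fun i => δ (k+1+i))
      (fun i hi => hεu (k+1+i) (by omega)) (fun i hi => hδu (k+1+i) (by omega))
      (by simp only [show k+1+(n-(k+1)) = n from by omega]; exact hsn)
      (fun i hi => hp (k+1+i) (by omega)) (fun i hi => hs (k+1+i) (by omega))
    simp only [Nat.add_zero] at h
    have hxk : (0:ℝ) ≤ |x|^(k+1) := by positivity
    have h2 := mul_le_mul_of_nonneg_right h hxk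
    refine h2.trans ?_
    rw [mul_assoc]
    apply mul_le_mul_of_nonneg_left _ (by positivity)
    have h3 : (∑ i ∈ Finset.range (n-(k+1)+1), |a (k+1+i)| * |x|^i) * |x|^(k+1)
        = ∑ i ∈ Finset.range (n-(k+1)+1), |a (k+1+i)| * |x|^(k+1+i) := by
      rw [Finset.sum_mul]
      refine Finset.sum_congr rfl fun i _ => ?_
      rw [pow_add]
      ring
    rw [h3]
    have h4 : ∑ i ∈ Finset.range (n-(k+1)+1), |a (k+1+i)| * |x|^(k+1+i)
        = ∑ j ∈ Finset.Ico (k+1) (n+1), |a j| * |x|^j := by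
      rw [Finset.sum_Ico_eq_sum_range]
      apply Finset.sum_congr _ fun i _ => rfl
      congr 1
      omega
    rw [h4, hT]
    apply Finset.sum_le_sum_of_subset_of_nonneg
    · rw [Finset.range_eq_Ico]
      exact Finset.Ico_subset_Ico (by omega) le_rfl
    · intro j _ _
      positivity
  -- Step 4: per-term bound on the EFT errors
  have hkey : ∀ k, k < n → |π k + σ k| * |x|^k
      ≤ u*(2+u)*((1+u)^(2*(n-(k+1))) * T) + u*(|a k| * |x|^k) := by
    intro k hk
    have hπk : |π k| ≤ u * (|s (k+1)| * |x|) := by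
      have h : π k = -(s (k+1) * x * ε k) := by rw [hπ k hk, hp k hk]; ring
      rw [h, abs_neg, abs_mul, abs_mul]
      have := hεu k hk
      nlinarith [abs_nonneg (s (k+1)), abs_nonneg x, abs_nonneg (ε k),
        mul_nonneg (abs_nonneg (s (k+1))) (abs_nonneg x)]
    have hpk : |p k| ≤ (1+u) * (|s (k+1)| * |x|) := by
      rw [hp k hk, abs_mul, abs_mul]
      have h3 : |1 + ε k| ≤ 1 + u := (abs_add_le 1 (ε k)).trans (by simpa using hεu k hk)
      nlinarith [abs_nonneg (s (k+1)), abs_nonneg x,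
        mul_nonneg (abs_nonneg (s (k+1))) (abs_nonneg x)]
    have hσk : |σ k| ≤ u * ((1+u) * (|s (k+1)| * |x|) + |a k|) := by
      have h1 : σ k = -((p k + a k) * δ k) := by rw [hσ k hk, hs k hk]; ring
      rw [h1, abs_neg, abs_mul]
      have h4 : |p k + a k| ≤ |p k| + |a k| := abs_add_le _ _
      have := hδu k hk
      nlinarith [abs_nonneg (p k + a k), abs_nonneg (δ k), abs_nonneg (p k),
        abs_nonneg (a k), mul_nonneg (abs_nonneg (s (k+1))) (abs_nonneg x)]
    have htri : |π k + σ k| ≤ |π k| + |σ k| := abs_add_le _ _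
    have h5 : |π k + σ k| ≤ u*(2+u)*(|s (k+1)| * |x|) + u * |a k| := by
      have h6 : u * (|s (k+1)| * |x|) + u * ((1+u) * (|s (k+1)| * |x|) + |a k|)
          = u*(2+u)*(|s (k+1)| * |x|) + u*|a k| := by ring
      linarith
    have hxk : (0:ℝ) ≤ |x|^k := by positivity
    have h6 := mul_le_mul_of_nonneg_right h5 hxk
    have h7 : (u*(2+u)*(|s (k+1)| * |x|) + u * |a k|) * |x|^k
        = u*(2+u)*(|s (k+1)| * |x|^(k+1)) + u*(|a k| * |x|^k) := by
      rw [pow_succ]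
      ring
    have h8 : u*(2+u)*(|s (k+1)| * |x|^(k+1)) ≤ u*(2+u)*((1+u)^(2*(n-(k+1))) * T) :=
      mul_le_mul_of_nonneg_left (hskb k hk) (by positivity)
    rw [h7] at h6
    linarith
  -- Step 5: summed bound
  have hgeo : ∑ k ∈ Finset.range n, (1+u)^(2*(n-(k+1))) = ∑ j ∈ Finset.range n, ((1+u)^2)^j := by
    rw [← Finset.sum_range_reflect (fun j => ((1+u)^2)^j) n]
    refine Finset.sum_congr rfl fun k hk => ?_
    rw [← pow_mul]
    congr 1
    have := Finset.mem_range.1 hk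
    omega
  have hgs : u*(2+u) * ∑ j ∈ Finset.range n, ((1+u)^2)^j = (1+u)^(2*n) - 1 := by
    calc u*(2+u) * ∑ j ∈ Finset.range n, ((1+u)^2)^j
        = (∑ j ∈ Finset.range n, ((1+u)^2)^j) * ((1+u)^2 - 1) := by ring
      _ = ((1+u)^2)^n - 1 := geom_sum_mul _ n
      _ = (1+u)^(2*n) - 1 := by rw [pow_mul]
  have haT : ∑ k ∈ Finset.range n, |a k| * |x|^k ≤ T := by
    rw [hT]
    apply Finset.sum_le_sum_of_subset_of_nonneg (Finset.range_subset_range.2 (by omega))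
    intro j _ _
    positivity
  have hSb : S ≤ ((1+u)^(2*n) - 1 + u) * T := by
    have h1 : S ≤ ∑ k ∈ Finset.range n,
        (u*(2+u)*((1+u)^(2*(n-(k+1))) * T) + u*(|a k| * |x|^k)) :=
      Finset.sum_le_sum fun k hk => hkey k (Finset.mem_range.1 hk)
    have h2 : ∑ k ∈ Finset.range n, (u*(2+u)*((1+u)^(2*(n-(k+1))) * T) + u*(|a k| * |x|^k))
        = u*(2+u) * (∑ k ∈ Finset.range n, (1+u)^(2*(n-(k+1)))) * T
          + u * ∑ k ∈ Finset.range n, |a k| * |x|^k := by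
      rw [Finset.sum_add_distrib]
      congr 1
      · have hc : ∀ k ∈ Finset.range n, u*(2+u)*((1+u)^(2*(n-(k+1))) * T)
            = (u*(2+u)*(1+u)^(2*(n-(k+1)))) * T := fun k _ => by ring
        rw [Finset.sum_congr rfl hc, ← Finset.sum_mul, ← Finset.mul_sum]
      · rw [Finset.mul_sum]
    rw [h2, hgeo] at h1
    have h3 : u*(2+u) * (∑ j ∈ Finset.range n, ((1+u)^2)^j) * T = ((1+u)^(2*n) - 1) * T := by
      rw [← hgs]
    have h4 : u * ∑ k ∈ Finset.range n, |a k| * |x|^k ≤ u * T :=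
      mul_le_mul_of_nonneg_left haT hu0
    nlinarith [h1]
  -- Step 6: conclusion
  have hv1 : (1:ℝ) ≤ (1+u)^(2*n) := one_le_pow₀ (by linarith)
  have hv2 : (1+u)^(2*n) * (1 - (2*n : ℕ)*u) ≤ 1 := aux_pow_bound u hu0 (2*n)
  have hcast : ((2*n : ℕ) : ℝ) = 2*(n:ℝ) := by push_cast; ring
  rw [hcast] at hv2
  have hpos : (0:ℝ) < 1 - 2*(n:ℝ)*u := by linarith
  have hg : (1+u)^(2*n) - 1 ≤ 2*(n:ℝ)*u/(1 - 2*(n:ℝ)*u) := by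
    rw [le_div_iff₀ hpos]
    nlinarith [hv2]
  have hvu : (1+u)^2 ≤ (1+u)^(2*n) := pow_le_pow_right₀ (by linarith) (by omega)
  have hvmu : 0 ≤ (1+u)^(2*n) - 1 - u := by nlinarith
  have hpow : (1+u)^(2*(n-1)+1) * (1+u) = (1+u)^(2*n) := by
    rw [← pow_succ]
    congr 1
    omega
  have hdecomp : rbar - P = ε' * P + (1 + ε') * (chat - E) := by
    rw [hrbar]
    have h : s 0 = P - E := by linarith [hEFT]
    rw [h]
    ring
  have h1e : |1 + ε'| ≤ 1 + u := (abs_add_le 1 ε').trans (by simpa using hε')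
  have hfin1 : |rbar - P| ≤ u * |P| + (1+u) * |chat - E| := by
    rw [hdecomp]
    calc |ε' * P + (1 + ε') * (chat - E)| ≤ |ε' * P| + |(1 + ε') * (chat - E)| := abs_add_le _ _
      _ = |ε'| * |P| + |1 + ε'| * |chat - E| := by rw [abs_mul, abs_mul]
      _ ≤ u * |P| + (1+u) * |chat - E| := by
          have h1 := mul_le_mul_of_nonneg_right hε' (abs_nonneg P)
          have h2 := mul_le_mul_of_nonneg_right h1e (abs_nonneg (chat - E))
          linarith
  have hfin2 : (1+u) * |chat - E| ≤ ((1+u)^(2*n) - 1 - u) * S := by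
    have h1 := mul_le_mul_of_nonneg_left hCE (by linarith : (0:ℝ) ≤ 1+u)
    have h2 : (1+u) * (((1+u)^(2*(n-1)+1) - 1) * S) = ((1+u)^(2*n) - 1 - u) * S := by
      rw [← hpow]
      ring
    linarith
  have hfin3 : ((1+u)^(2*n) - 1 - u) * S ≤ ((1+u)^(2*n) - 1 - u) * (((1+u)^(2*n) - 1 + u) * T) :=
    mul_le_mul_of_nonneg_left hSb hvmu
  have hfin4 : ((1+u)^(2*n) - 1 - u) * (((1+u)^(2*n) - 1 + u) * T)
      ≤ (2*(n:ℝ)*u/(1 - 2*(n:ℝ)*u))^2 * T := by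
    have hq : ((1+u)^(2*n) - 1) * ((1+u)^(2*n) - 1)
        ≤ (2*(n:ℝ)*u/(1 - 2*(n:ℝ)*u)) * (2*(n:ℝ)*u/(1 - 2*(n:ℝ)*u)) :=
      mul_self_le_mul_self (by linarith) hg
    nlinarith [hT0, sq_nonneg u, mul_le_mul_of_nonneg_right hq hT0]
  linarith [hfin1, hfin2, hfin3, hfin4]
end

section
/- A priori condition ensuring the faithful-rounding criterion for compensated Horner (core of Theorem 4): Let u be a real number with 0 < u < 1, let n be a positive integer with 2n·u < 1, and let P, P̃, r̂, c, ĉ, r̄ be real numbers with P̃ ≥ 0 and P ≠ 0. Suppose that P = r̂ + c, that |ĉ − c| ≤ γ_{2n−1}·γ_{2n}·P̃, that r̄ = (r̂ + ĉ)·(1+ε) for some ε with |ε| ≤ u, and that P̃/|P| < ((1−u)/(2+u)) · u · γ_{2n}^{−2}. Then r̄·P > 0 (the compensated result has the same sign as the exact value) and |ĉ − c| < (u/2)·|r̄|. -/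
/-!
Write `e = ĉ - c`, so that `r̄ = (P + e)(1 + ε)`. Since `γ_{2n-1} ≤ γ_{2n}`, the error bound and
the condition-number hypothesis give `|e| ≤ γ_{2n}² P̃ < B |P|` with `B = u(1 - u)/(2 + u) < 1`.
Then `P + e` has the sign of `P`, and `|r̄| ≥ (1 - u)(|P| - |e|)`, which exceeds `2|e|/u`
precisely because `|e| < B |P|`.
-/

-- `k` is real so that `γ_{2n-1}` involves no truncated subtraction.
noncomputable def gammaFactor (u k : ℝ) : ℝ := k * u / (1 - k * u)

lemma gammaFactor_pos {u k : ℝ} (hku : 0 < k * u) (hk : k * u < 1) : 0 < gammaFactor u k :=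
  div_pos hku (sub_pos.mpr hk)

lemma gammaFactor_le_gammaFactor {u k l : ℝ} (hu : 0 ≤ u) (hkl : k ≤ l) (hl : l * u < 1) :
    gammaFactor u k ≤ gammaFactor u l := by
  have hklu : k * u ≤ l * u := mul_le_mul_of_nonneg_right hkl hu
  unfold gammaFactor
  rw [div_le_div_iff₀ (by linarith) (by linarith)]
  nlinarith

section Rounding

variable {u P e ε : ℝ}

lemma mul_one_add_mul_pos_of_abs_lt (hε : |ε| < 1) (he : |e| < |P|) :
    (P + e) * (1 + ε) * P > 0 := by
  have hε1 : 0 < 1 + ε := by linarith [neg_abs_le ε]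
  have hPe : 0 < P * P + e * P := by
    have : -(|e| * |P|) ≤ e * P := by rw [← abs_mul]; exact neg_abs_le _
    have := mul_lt_mul_of_pos_right he ((abs_nonneg e).trans_lt he)
    linarith [abs_mul_abs_self P]
  calc (P + e) * (1 + ε) * P = (1 + ε) * (P * P + e * P) := by ring
    _ > 0 := mul_pos hε1 hPe

lemma one_sub_mul_sub_abs_le_abs_mul (hu1 : u ≤ 1) (hε : |ε| ≤ u) :
    (1 - u) * (|P| - |e|) ≤ |(P + e) * (1 + ε)| := by
  have hε1 : 1 - u ≤ |1 + ε| := by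
    have := abs_sub_abs_le_abs_add (1 : ℝ) ε
    rw [abs_one] at this
    linarith
  rw [abs_mul, mul_comm (1 - u)]
  exact mul_le_mul (abs_sub_abs_le_abs_add P e) hε1 (by linarith) (abs_nonneg _)

lemma abs_lt_half_mul_abs_mul (hu : 0 < u) (hu1 : u < 1) (hε : |ε| ≤ u)
    (he : |e| < (1 - u) / (2 + u) * u * |P|) :
    |e| < u / 2 * |(P + e) * (1 + ε)| := by
  have he' : |e| * (2 + u) < (1 - u) * u * |P| := by
    rw [div_mul_eq_mul_div, div_mul_eq_mul_div, lt_div_iff₀ (by linarith)] at he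
    linarith
  have hr := one_sub_mul_sub_abs_le_abs_mul (P := P) (e := e) hu1.le hε
  -- `u (1 - u) ≤ u` turns `|e| (2 + u) < u (1 - u) |P|` into `|e| < u/2 · (1 - u)(|P| - |e|)`.
  nlinarith [mul_nonneg (abs_nonneg e) (sq_nonneg u)]

end Rounding

/-- A priori condition ensuring the faithful-rounding criterion for compensated
Horner (core of Theorem 4). Here `γ_k = k·u/(1 − k·u)`, `P̃/|P|` is the
condition number, and the conclusion `|ĉ − c| < (u/2)·|r̄|` is the criterion
guaranteeing that `r̄` is a faithful rounding of the exact value `P`. -/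
theorem a_priori_faithful_rounding_criterion
    (u : ℝ) (hu : 0 < u) (hu1 : u < 1)
    (n : ℕ) (hn : 1 ≤ n) (h2nu : 2 * (n : ℝ) * u < 1)
    (P Ptilde rhat c chat rbar ε : ℝ) (hPt : 0 ≤ Ptilde) (hP0 : P ≠ 0)
    (hP : P = rhat + c)
    (hc : |chat - c| ≤
      ((2 * (n : ℝ) - 1) * u / (1 - (2 * (n : ℝ) - 1) * u)) *
        (2 * (n : ℝ) * u / (1 - 2 * (n : ℝ) * u)) * Ptilde)
    (hε : |ε| ≤ u)
    (hrbar : rbar = (rhat + chat) * (1 + ε))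
    (hcond : Ptilde / |P| <
      (1 - u) / (2 + u) * u *
        ((2 * (n : ℝ) * u / (1 - 2 * (n : ℝ) * u)) ^ 2)⁻¹) :
    rbar * P > 0 ∧ |chat - c| < u / 2 * |rbar| := by
  change |chat - c| ≤ gammaFactor u (2 * n - 1) * gammaFactor u (2 * n) * Ptilde at hc
  change Ptilde / |P| < (1 - u) / (2 + u) * u * (gammaFactor u (2 * n) ^ 2)⁻¹ at hcond
  have hn' : (1 : ℝ) ≤ n := by exact_mod_cast hn
  have hγ : 0 < gammaFactor u (2 * n) := gammaFactor_pos (by positivity) h2nu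
  have hγ' : gammaFactor u (2 * n - 1) ≤ gammaFactor u (2 * n) :=
    gammaFactor_le_gammaFactor hu.le (by linarith) h2nu
  have hP' : 0 < |P| := abs_pos.mpr hP0
  rw [div_lt_iff₀ hP', mul_right_comm, lt_mul_inv_iff₀ (by positivity)] at hcond
  have he : |chat - c| < (1 - u) / (2 + u) * u * |P| :=
    calc |chat - c| ≤ gammaFactor u (2 * n) ^ 2 * Ptilde := by
          rw [sq]; exact hc.trans (by gcongr)
      _ < (1 - u) / (2 + u) * u * |P| := by linarith
  have hB : (1 - u) / (2 + u) * u < 1 := by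
    rw [div_mul_eq_mul_div, div_lt_one (by linarith)]; nlinarith
  have hrbar' : rbar = (P + (chat - c)) * (1 + ε) := by rw [hrbar, hP]; ring
  rw [hrbar']
  exact ⟨mul_one_add_mul_pos_of_abs_lt (by linarith) (by nlinarith),
    abs_lt_half_mul_abs_mul hu hu1 hε he⟩
end

section
/- Validated dynamic forward error bound for compensated Horner (Theorem 5, part (ii)): Let u be a real number with 0 < u and 2u < 1, and let P, r̂, c, ĉ, r̄, e, α̂ be real numbers such that P = r̂ + c, r̄ + e = r̂ + ĉ, and |ĉ − c| ≤ α̂. Let μ, δ be real numbers with |μ| ≤ u, |δ| ≤ u, and set s = (α̂ + |e|)/(1+μ) and β̂ = ( s/(1 − 2u) ) / (1+δ). Then |r̄ − P| ≤ α̂ + |e| ≤ β̂. -/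
/-- Validated dynamic forward error bound for compensated Horner (Theorem 5,
part (ii)). Here `P = p(x)`, `r̂` is the Horner result with exact error `c`
(`P = r̂ + c`), `ĉ` the computed correcting term, `r̄ + e = r̂ + ĉ` the exact
TwoSum decomposition, `α̂` a validated bound for `|ĉ − c|`, and `β̂` the
computed validated bound. -/
theorem dynamic_forward_error_bound
    (u P rhat c chat rbar e αhat s βhat μ δ : ℝ)
    (hu : 0 < u) (h2u : 2 * u < 1)
    (hP : P = rhat + c)
    (htwosum : rbar + e = rhat + chat)
    (hα : |chat - c| ≤ αhat)
    (hμ : |μ| ≤ u) (hδ : |δ| ≤ u)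
    (hs : s = (αhat + |e|) / (1 + μ))
    (hβ : βhat = s / (1 - 2 * u) / (1 + δ)) :
    |rbar - P| ≤ αhat + |e| ∧ αhat + |e| ≤ βhat := by
  have hμ1 : -u ≤ μ ∧ μ ≤ u := abs_le.mp hμ
  have hδ1 : -u ≤ δ ∧ δ ≤ u := abs_le.mp hδ
  have hμpos : 0 < 1 + μ := by linarith
  have hδpos : 0 < 1 + δ := by linarith
  have h2upos : 0 < 1 - 2 * u := by linarith
  have hA : 0 ≤ αhat + |e| := by
    have := abs_nonneg (chat - c)
    have := abs_nonneg e
    linarith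
  constructor
  · have heq : rbar - P = (chat - c) - e := by
      rw [hP]; linarith
    calc |rbar - P| = |(chat - c) - e| := by rw [heq]
      _ ≤ |chat - c| + |e| := abs_sub _ _
      _ ≤ αhat + |e| := by linarith
  · have hβ' : βhat = (αhat + |e|) / ((1 + μ) * (1 - 2 * u) * (1 + δ)) := by
      rw [hβ, hs]; field_simp
    have hμδ : μ * δ ≤ u * u := by
      calc μ * δ ≤ |μ * δ| := le_abs_self _
        _ = |μ| * |δ| := abs_mul _ _
        _ ≤ u * u := mul_le_mul hμ hδ (abs_nonneg _) hu.le
    have h1 : (1 + μ) * (1 + δ) ≤ (1 + u) * (1 + u) := by nlinarith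
    have hD : (1 + μ) * (1 - 2 * u) * (1 + δ) ≤ 1 := by
      nlinarith [mul_le_mul_of_nonneg_right h1 h2upos.le,
        mul_nonneg (mul_nonneg hu.le hu.le) hu.le, mul_pos hu hu]
    rw [hβ', le_div_iff₀ (by positivity)]
    nlinarith [mul_le_mul_of_nonneg_left hD hA]
end
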